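/- arXiv:1712.07813 — 4 statements merged into one kernel-verified Lean document; each statement's English description precedes it below -/
import Mathlib

section
/- (Chen–McKay, recurrence coefficient identity.) Let n ≥ 1, α > 0, λ ∈ ℝ with α + λ + 1 > 0, and t > 0. Let π_k(x;t) be the monic orthogonal polynomials with respect to w(x,t) = (x+t)^λ x^α e^{−x}, with recurrence coefficient α_n(t) defined by x π_n = π_{n+1} + α_n(t) π_n + β_n(t) π_{n−1}, and let R_n(t) = (λ/h_n(t)) ∫₀^∞ π_n(x;t)² w(x,t)/(x+t) dx. Then α_n(t) = 2n + 1 + α + λ − t R_n(t). -/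
/-!
Write `w(x) = (x+t)^λ x^α e^{-x}`. Differentiating the boundary term `x w(x) P(x)` gives the
Pearson-type identity `(x w P)' = w ((α+1+λ) P + x P' - x P) - λ t w P / (x+t)`, and since
`x w P` vanishes at `0` and at `∞`, the moment functional `L(q) = ∫₀^∞ q w` satisfies
`L((α+1+λ) P + x P' - x P) = λ t ∫₀^∞ P w / (x+t)`. For `P = π_n²` orthogonality gives
`L(π_n²) = h_n`, `L(x (π_n²)') = 2n h_n` (as `x π_n' - n π_n` has degree `< n`) and
`L(x π_n²) = α_n h_n` by the recurrence; solving for `α_n` is the claim.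
-/

open MeasureTheory Set Finset

open Polynomial Filter Topology Real

theorem Polynomial.Monic.degree_X_mul_derivative_sub_lt {R : Type*} [CommRing R] {q : R[X]}
    (hq : q.Monic) :
    (X * derivative q - C (q.natDegree : R) * q).degree < (q.natDegree : WithBot ℕ) := by
  refine degree_lt_iff_coeff_zero _ _ |>.2 fun m hm => ?_
  have hm : q.natDegree ≤ m := by exact_mod_cast hm
  rcases m with _ | k
  · simp [Nat.le_zero.1 hm]
  rw [coeff_sub, coeff_X_mul, coeff_derivative, coeff_C_mul]
  rcases hm.eq_or_lt with heq | hlt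
  · rw [← heq, hq.coeff_natDegree, heq]; push_cast; ring
  · rw [coeff_eq_zero_of_natDegree_lt hlt]; ring

namespace OrthogonalPolynomials

variable {R : Type*} [CommRing R] (L : R[X] →ₗ[R] R) {p : ℕ → R[X]} {h : ℕ → R}

theorem map_mul_eq_zero_of_degree_lt [Nontrivial R] (hmonic : ∀ k, (p k).Monic)
    (hdeg : ∀ k, (p k).natDegree = k) (horth : ∀ j k, L (p j * p k) = if j = k then h j else 0)
    {n : ℕ} {q : R[X]} (hq : q.degree < n) : L (p n * q) = 0 := by
  let S : Sequence R := ⟨p, fun k => by rw [degree_eq_natDegree (hmonic k).ne_zero, hdeg]⟩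
  have hspan : q ∈ Submodule.span R (p '' Set.Iio n) := by
    rw [S.span_degreeLT fun k _ => by simp [S, (hmonic k).leadingCoeff]]
    exact mem_degreeLT.2 hq
  have hgen : p '' Set.Iio n ⊆ LinearMap.ker (L ∘ₗ LinearMap.mulLeft R (p n)) := by
    rintro _ ⟨k, hk, rfl⟩
    simp [horth, (show n ≠ k from (Set.mem_Iio.1 hk).ne')]
  simpa using Submodule.span_le.2 hgen hspan

theorem map_X_mul_sq (horth : ∀ j k, L (p j * p k) = if j = k then h j else 0)
    {n : ℕ} (hn : 1 ≤ n) {a b : R}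
    (hrec : X * p n = p (n + 1) + C a * p n + C b * p (n - 1)) :
    L (X * p n ^ 2) = a * h n := by
  have hsplit : X * p n ^ 2 = p (n + 1) * p n + a • (p n * p n) + b • (p (n - 1) * p n) := by
    rw [sq, ← mul_assoc, hrec, smul_eq_C_mul, smul_eq_C_mul]; ring
  rw [hsplit, map_add, map_add, map_smul, map_smul, horth, horth, horth]
  simp [(show n - 1 ≠ n by omega)]

theorem map_X_mul_derivative_sq [Nontrivial R] (hmonic : ∀ k, (p k).Monic)
    (hdeg : ∀ k, (p k).natDegree = k) (horth : ∀ j k, L (p j * p k) = if j = k then h j else 0)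
    (n : ℕ) : L (X * derivative (p n ^ 2)) = 2 * n * h n := by
  set r := X * derivative (p n) - C (n : R) * p n
  have hr : r.degree < n := by simpa [r, hdeg] using (hmonic n).degree_X_mul_derivative_sub_lt
  have hsplit : X * derivative (p n ^ 2) = (2 * n : R) • (p n * p n) + (2 : R) • (p n * r) := by
    simp only [derivative_sq, smul_eq_C_mul, r, map_mul, map_ofNat]; ring
  rw [hsplit, map_add, map_smul, map_smul, horth,
    map_mul_eq_zero_of_degree_lt L hmonic hdeg horth hr]
  simp

end OrthogonalPolynomials

theorem add_one_pow_mul_eq_sum (N : ℕ) (x y : ℝ) :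
    (x + 1) ^ N * y = ∑ k ∈ range (N + 1), (N.choose k : ℝ) * (x ^ k * y) := by
  rw [add_pow, sum_mul]
  exact sum_congr rfl fun k _ => by ring

theorem integrableOn_pow_mul_rpow_mul_exp_neg (k : ℕ) {s : ℝ} (hs : -1 < s) :
    IntegrableOn (fun x => x ^ k * (x ^ s * exp (-x))) (Ioi 0) := by
  have hk : (0 : ℝ) ≤ k := k.cast_nonneg
  refine (GammaIntegral_convergent (s := s + k + 1) (by linarith)).congr_fun
    (fun x (hx : 0 < x) => ?_) measurableSet_Ioi
  dsimp only
  rw [add_sub_cancel_right, rpow_add hx, rpow_natCast]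
  ring

theorem tendsto_pow_mul_rpow_mul_exp_neg (k : ℕ) (s : ℝ) :
    Tendsto (fun x => x ^ k * (x ^ s * exp (-x))) atTop (𝓝 0) := by
  refine (tendsto_rpow_mul_exp_neg_mul_atTop_nhds_zero (s + k) 1 one_pos).congr' ?_
  filter_upwards [eventually_gt_atTop 0] with x hx
  rw [rpow_add hx, rpow_natCast, neg_one_mul]
  ring

theorem integrableOn_add_one_pow_mul_rpow_mul_exp_neg (N : ℕ) {s : ℝ} (hs : -1 < s) :
    IntegrableOn (fun x => (x + 1) ^ N * (x ^ s * exp (-x))) (Ioi 0) := by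
  simp_rw [add_one_pow_mul_eq_sum]
  exact integrable_finsetSum _ fun k _ =>
    (integrableOn_pow_mul_rpow_mul_exp_neg k hs).const_mul _

theorem tendsto_add_one_pow_mul_rpow_mul_exp_neg (N : ℕ) (s : ℝ) :
    Tendsto (fun x => (x + 1) ^ N * (x ^ s * exp (-x))) atTop (𝓝 0) := by
  simp_rw [add_one_pow_mul_eq_sum]
  simpa using tendsto_finsetSum (range (N + 1)) fun k _ =>
    (tendsto_pow_mul_rpow_mul_exp_neg k s).const_mul (N.choose k : ℝ)

namespace PerturbedLaguerre

def PolyBounded (g : ℝ → ℝ) : Prop :=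
  ∃ C : ℝ, ∃ N : ℕ, ∀ x ∈ Ioi (0 : ℝ), |g x| ≤ C * (x + 1) ^ N

namespace PolyBounded

variable {f g : ℝ → ℝ} {s : ℝ}

theorem mul (hf : PolyBounded f) (hg : PolyBounded g) : PolyBounded fun x => f x * g x := by
  obtain ⟨C₁, N₁, hf⟩ := hf
  obtain ⟨C₂, N₂, hg⟩ := hg
  refine ⟨C₁ * C₂, N₁ + N₂, fun x hx => ?_⟩
  calc |f x * g x| = |f x| * |g x| := abs_mul _ _
    _ ≤ C₁ * (x + 1) ^ N₁ * (C₂ * (x + 1) ^ N₂) :=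
      mul_le_mul (hf x hx) (hg x hx) (abs_nonneg _) ((abs_nonneg _).trans (hf x hx))
    _ = C₁ * C₂ * (x + 1) ^ (N₁ + N₂) := by ring

theorem add_rpow {t : ℝ} (ht : 0 < t) (μ : ℝ) : PolyBounded fun x => (x + t) ^ μ := by
  rcases le_total μ 0 with hμ | hμ
  · refine ⟨t ^ μ, 0, fun x (hx : 0 < x) => ?_⟩
    dsimp only
    rw [abs_of_nonneg (by positivity), pow_zero, mul_one]
    exact rpow_le_rpow_of_nonpos ht (by linarith) hμ
  · refine ⟨(t + 1) ^ μ, ⌈μ⌉₊, fun x (hx : 0 < x) => ?_⟩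
    dsimp only
    rw [abs_of_nonneg (by positivity), ← rpow_natCast]
    calc (x + t) ^ μ ≤ ((t + 1) * (x + 1)) ^ μ := by gcongr; nlinarith
      _ = (t + 1) ^ μ * (x + 1) ^ μ := mul_rpow (by positivity) (by positivity)
      _ ≤ (t + 1) ^ μ * (x + 1) ^ (⌈μ⌉₊ : ℝ) := by
        gcongr
        exacts [by linarith, Nat.le_ceil μ]

theorem norm_mul_rpow_mul_exp_neg_le {C : ℝ} {N : ℕ}
    (hg : ∀ x ∈ Ioi (0 : ℝ), |g x| ≤ C * (x + 1) ^ N) {x : ℝ} (hx : x ∈ Ioi (0 : ℝ)) :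
    ‖g x * (x ^ s * exp (-x))‖ ≤ C * ((x + 1) ^ N * (x ^ s * exp (-x))) := by
  have hpos : 0 ≤ x ^ s * exp (-x) := by have : 0 < x := hx; positivity
  rw [norm_mul, Real.norm_eq_abs, Real.norm_of_nonneg hpos, ← mul_assoc C]
  exact mul_le_mul_of_nonneg_right (hg x hx) hpos

theorem integrableOn_mul_rpow_mul_exp_neg (hg : PolyBounded g) (hgc : ContinuousOn g (Ioi 0))
    (hs : -1 < s) : IntegrableOn (fun x => g x * (x ^ s * exp (-x))) (Ioi 0) := by
  obtain ⟨C, N, hg⟩ := hg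
  refine ((integrableOn_add_one_pow_mul_rpow_mul_exp_neg N hs).const_mul C).mono' ?_ ?_
  · refine (hgc.mul ((continuousOn_id.rpow_const fun x (hx : 0 < x) => Or.inl hx.ne').mul
      (by fun_prop))).aestronglyMeasurable measurableSet_Ioi
  · exact (ae_restrict_mem measurableSet_Ioi).mono fun x hx => norm_mul_rpow_mul_exp_neg_le hg hx

theorem tendsto_mul_rpow_mul_exp_neg (hg : PolyBounded g) (s : ℝ) :
    Tendsto (fun x => g x * (x ^ s * exp (-x))) atTop (𝓝 0) := by
  obtain ⟨C, N, hg⟩ := hg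
  have hbound := (tendsto_add_one_pow_mul_rpow_mul_exp_neg N s).const_mul C
  rw [mul_zero] at hbound
  refine squeeze_zero_norm' ?_ hbound
  filter_upwards [eventually_gt_atTop 0] with x hx using norm_mul_rpow_mul_exp_neg_le hg hx

end PolyBounded

theorem polyBounded_eval (q : ℝ[X]) : PolyBounded q.eval := by
  refine ⟨∑ i ∈ range (q.natDegree + 1), |q.coeff i|, q.natDegree, fun x (hx : 0 < x) => ?_⟩
  calc |q.eval x| ≤ ∑ i ∈ range (q.natDegree + 1), |q.coeff i * x ^ i| := by
        rw [eval_eq_sum_range]; exact abs_sum_le_sum_abs _ _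
    _ ≤ ∑ i ∈ range (q.natDegree + 1), |q.coeff i| * (x + 1) ^ q.natDegree := by
        refine sum_le_sum fun i hi => ?_
        rw [abs_mul, abs_of_nonneg (pow_nonneg hx.le i)]
        gcongr
        calc x ^ i ≤ (x + 1) ^ i := by gcongr; linarith
          _ ≤ (x + 1) ^ q.natDegree :=
            pow_le_pow_right₀ (by linarith) (Nat.lt_succ_iff.1 (mem_range.1 hi))
    _ = _ := (sum_mul ..).symm

noncomputable def weight (α lam t x : ℝ) : ℝ := (x + t) ^ lam * x ^ α * exp (-x)

variable {α lam t : ℝ}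

theorem continuousOn_add_rpow (ht : 0 < t) (μ : ℝ) :
    ContinuousOn (fun x : ℝ => (x + t) ^ μ) (Ioi 0) :=
  (continuousOn_id.add continuousOn_const).rpow_const fun x (hx : 0 < x) =>
    Or.inl (by dsimp; linarith)

theorem integrableOn_eval_mul_weight (hα : -1 < α) (ht : 0 < t) (q : ℝ[X]) :
    IntegrableOn (fun x => q.eval x * weight α lam t x) (Ioi 0) := by
  have hg := (polyBounded_eval q).mul (PolyBounded.add_rpow ht lam)
  refine (hg.integrableOn_mul_rpow_mul_exp_neg
    (q.continuousOn.mul (continuousOn_add_rpow ht lam)) hα).congr_fun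
    (fun x _ => by simp only [weight]; ring) measurableSet_Ioi

theorem integrableOn_eval_mul_weight_div (hα : -1 < α) (ht : 0 < t) (q : ℝ[X]) :
    IntegrableOn (fun x => q.eval x * weight α lam t x / (x + t)) (Ioi 0) := by
  have hg := (polyBounded_eval q).mul (PolyBounded.add_rpow ht (lam - 1))
  refine (hg.integrableOn_mul_rpow_mul_exp_neg
    (q.continuousOn.mul (continuousOn_add_rpow ht _)) hα).congr_fun
    (fun x (hx : 0 < x) => ?_) measurableSet_Ioi
  dsimp only
  rw [rpow_sub_one (by linarith), weight]
  ring

noncomputable def moment (lam : ℝ) (hα : -1 < α) (ht : 0 < t) : ℝ[X] →ₗ[ℝ] ℝ where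
  toFun q := ∫ x in Ioi 0, q.eval x * weight α lam t x
  map_add' q r := by
    simp only [eval_add, add_mul]
    exact integral_add (integrableOn_eval_mul_weight hα ht q)
      (integrableOn_eval_mul_weight hα ht r)
  map_smul' c q := by
    simp only [eval_smul, smul_eq_mul, mul_assoc, integral_const_mul, RingHom.id_apply]

theorem moment_apply (hα : -1 < α) (ht : 0 < t) (q : ℝ[X]) :
    moment lam hα ht q = ∫ x in Ioi 0, q.eval x * weight α lam t x := rfl

theorem hasDerivAt_pearson {x : ℝ} (hx : 0 < x) (ht : 0 < t) (P : ℝ[X]) :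
    HasDerivAt (fun y => (y + t) ^ lam * P.eval y * (y ^ (α + 1) * exp (-y)))
      ((C (α + 1 + lam) * P + X * derivative P - X * P).eval x * weight α lam t x
        - lam * t * (P.eval x * weight α lam t x / (x + t))) x := by
  have hxt : 0 < x + t := by linarith
  have hshift := ((hasDerivAt_id x).add_const t).rpow_const (p := lam) (Or.inl hxt.ne')
  have hpow := hasDerivAt_rpow_const (p := α + 1) (Or.inl hx.ne')
  have hexp := (hasDerivAt_neg x).exp
  refine ((hshift.mul (P.hasDerivAt x)).mul (hpow.mul hexp)).congr_deriv ?_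
  simp only [id, add_sub_cancel_right, Pi.mul_apply]
  rw [rpow_add_one hx.ne', rpow_sub_one hxt.ne']
  simp only [weight, eval_sub, eval_add, eval_mul, eval_C, eval_X]
  field_simp
  ring

theorem moment_C_mul_add_X_mul_derivative_sub_X_mul (hα : -1 < α) (ht : 0 < t) (P : ℝ[X]) :
    moment lam hα ht (C (α + 1 + lam) * P + X * derivative P - X * P)
      = lam * t * ∫ x in Ioi 0, P.eval x * weight α lam t x / (x + t) := by
  set F := fun y => (y + t) ^ lam * P.eval y * (y ^ (α + 1) * exp (-y))
  have hcont : ContinuousWithinAt F (Ici 0) 0 := by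
    have hpow : ContinuousAt (fun y : ℝ => y ^ (α + 1)) 0 :=
      continuousAt_rpow_const _ _ (Or.inr (by linarith))
    have hshift : ContinuousAt (fun y : ℝ => (y + t) ^ lam) 0 :=
      (continuousAt_id.add continuousAt_const).rpow_const (Or.inl (by simpa using ht.ne'))
    exact ((hshift.mul P.continuousAt).mul (hpow.mul (by fun_prop))).continuousWithinAt
  have hF0 : F 0 = 0 := by simp [F, zero_rpow (by linarith : α + 1 ≠ 0)]
  have hlim : Tendsto F atTop (𝓝 0) :=
    ((PolyBounded.add_rpow ht lam).mul (polyBounded_eval P)).tendsto_mul_rpow_mul_exp_neg _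
  have hint := integrableOn_eval_mul_weight (lam := lam) hα ht
    (C (α + 1 + lam) * P + X * derivative P - X * P)
  have hint_div := (integrableOn_eval_mul_weight_div (lam := lam) hα ht P).const_mul (lam * t)
  have hftc := integral_Ioi_of_hasDerivAt_of_tendsto hcont
    (fun x hx => hasDerivAt_pearson hx ht P) (hint.sub hint_div) hlim
  rwa [hF0, sub_zero, integral_sub hint hint_div, integral_const_mul, sub_eq_zero] at hftc

end PerturbedLaguerre

open PerturbedLaguerre OrthogonalPolynomials

theorem recurrence_coefficient_alpha_eq_general
    (n : ℕ) (hn : 1 ≤ n) (α lam t : ℝ) (hα : 0 < α) (ht : 0 < t)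
    (p : ℕ → Polynomial ℝ) (h : ℕ → ℝ) (a b : ℝ)
    (hmonic : ∀ k, (p k).Monic)
    (hdeg : ∀ k, (p k).natDegree = k)
    (hpos : ∀ k, 0 < h k)
    (horth : ∀ j k,
      ∫ x in Set.Ioi (0 : ℝ),
          (p j).eval x * (p k).eval x * ((x + t) ^ lam * x ^ α * Real.exp (-x))
        = if j = k then h j else 0)
    (hrec : Polynomial.X * p n
        = p (n + 1) + Polynomial.C a * p n + Polynomial.C b * p (n - 1)) :
    a = 2 * n + 1 + α + lam -
        t * ((lam / h n) * ∫ x in Set.Ioi (0 : ℝ),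
          (p n).eval x ^ 2 * ((x + t) ^ lam * x ^ α * Real.exp (-x)) / (x + t)) := by
  have hα' : -1 < α := by linarith
  set L := moment lam hα' ht
  have hLorth (j k : ℕ) : L (p j * p k) = if j = k then h j else 0 := by
    simpa [L, moment_apply, weight, mul_assoc] using horth j k
  have hibp := moment_C_mul_add_X_mul_derivative_sub_X_mul (lam := lam) hα' ht (p n ^ 2)
  rw [map_sub, map_add, C_mul', map_smul, sq, hLorth, if_pos rfl, ← sq,
    map_X_mul_derivative_sq L hmonic hdeg hLorth, map_X_mul_sq L hLorth hn hrec] at hibp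
  simp only [weight, eval_pow, smul_eq_mul] at hibp
  set I := ∫ x in Set.Ioi (0 : ℝ),
    (p n).eval x ^ 2 * ((x + t) ^ lam * x ^ α * Real.exp (-x)) / (x + t)
  rw [show t * (lam / h n * I) = lam * t * I / h n by ring, ← hibp]
  field_simp [(hpos n).ne']
  ring

/-- Chen–McKay: for the monic orthogonal polynomials with respect to the
perturbed Laguerre weight `w(x,t) = (x+t)^λ x^α e^{−x}`, the recurrence coefficient
`α_n(t)` satisfies `α_n(t) = 2n + 1 + α + λ − t R_n(t)`, where
`R_n(t) = (λ/h_n) ∫₀^∞ π_n(x)² w(x,t)/(x+t) dx`. -/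
theorem recurrence_coefficient_alpha_eq
    (n : ℕ) (hn : 1 ≤ n) (α lam t : ℝ) (hα : 0 < α) (hsum : α + lam + 1 > 0) (ht : 0 < t)
    (p : ℕ → Polynomial ℝ) (h : ℕ → ℝ) (a b : ℝ)
    (hmonic : ∀ k, (p k).Monic)
    (hdeg : ∀ k, (p k).natDegree = k)
    (hpos : ∀ k, 0 < h k)
    (horth : ∀ j k,
      ∫ x in Set.Ioi (0 : ℝ),
          (p j).eval x * (p k).eval x * ((x + t) ^ lam * x ^ α * Real.exp (-x))
        = if j = k then h j else 0)
    (hrec : Polynomial.X * p n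
        = p (n + 1) + Polynomial.C a * p n + Polynomial.C b * p (n - 1)) :
    a = 2 * n + 1 + α + lam -
        t * ((lam / h n) * ∫ x in Set.Ioi (0 : ℝ),
          (p n).eval x ^ 2 * ((x + t) ^ lam * x ^ α * Real.exp (-x)) / (x + t)) :=
  recurrence_coefficient_alpha_eq_general n hn α lam t hα ht p h a b hmonic hdeg hpos horth hrec
end

section
/- (Chen–McKay, recurrence coefficient identity.) Let n ≥ 1, α > 0, λ ∈ ℝ with α + λ + 1 > 0, and let t vary in an open interval of (0,∞) on which t ↦ D_n(t;α,λ) is differentiable and positive. With H_n(t) = t (d/dt) log D_n(t;α,λ), and β_n(t) the recurrence coefficient from x π_n = π_{n+1} + α_n(t) π_n + β_n(t) π_{n−1}, one has β_n(t) = n(n + α + λ) + t H_n′(t) − H_n(t) whenever H_n is differentiable at t. -/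
/-!
The moments `μ_m(t) = ∫ x^m w(x,t) dx` satisfy `t μ_m' = (m + α + λ + 1) μ_m - μ_{m+1}`:
differentiate under the integral sign, integrate by parts, and split
`(x + t)^λ = (x + t) (x + t)^(λ-1)`. By Jacobi's formula the Hankel determinant then satisfies
`t D_n' = n(n + α + λ) D_n - T_n`, where `T_n` has its last moment column shifted by one, and
`t T_n'` is expressed in the same way through doubly shifted determinants. Orthogonality of `π_n`
and `π_{n+1}` to lower powers of `x` writes each shifted moment column as a combination of
unshifted ones, so all these determinants are multiples of `D_n` with factors read off the
coefficients of `π_n` and `π_{n+1}`. Hence `n(n + α + λ) + t H_n' - H_n` is a polynomial in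
those coefficients, and comparing the coefficients of `x^n` and `x^(n-1)` in the recurrence
identifies it with `β_n`.
-/

open MeasureTheory Set Finset Function Matrix Polynomial

theorem Matrix.hasDerivAt_det {𝕜 ι : Type*} [NontriviallyNormedField 𝕜] [Fintype ι]
    [DecidableEq ι] {A : 𝕜 → Matrix ι ι 𝕜} {A' : Matrix ι ι 𝕜} {t : 𝕜}
    (hA : ∀ i j, HasDerivAt (fun u => A u i j) (A' i j) t) :
    HasDerivAt (fun u => (A u).det) (∑ j, ((A t).updateCol j fun i => A' i j).det) t := by
  simp only [det_apply']
  have hterm (σ : Equiv.Perm ι) := (HasDerivAt.fun_finsetProd (u := univ)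
    fun i _ => hA (σ i) i).const_mul (Equiv.Perm.sign σ : 𝕜)
  refine (HasDerivAt.fun_sum fun σ _ => hterm σ).congr_deriv ?_
  simp only [Finset.mul_sum, smul_eq_mul]
  rw [Finset.sum_comm]
  refine Finset.sum_congr rfl fun j _ => Finset.sum_congr rfl fun σ _ => ?_
  rw [← Finset.prod_erase_mul univ _ (mem_univ j), updateCol_self,
    Finset.prod_congr rfl fun i hi => updateCol_ne (Finset.ne_of_mem_erase hi)]

theorem Matrix.sum_det_updateCol_mul {R ι : Type*} [CommRing R] [Fintype ι] [DecidableEq ι]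
    (M : Matrix ι ι R) (d : ι → R) :
    ∑ k, (M.updateCol k fun j => d j * M j k).det = (∑ j, d j) * M.det := by
  calc ∑ k, (M.updateCol k fun j => d j * M j k).det
      = Matrix.trace (M.adjugate * (Matrix.diagonal d * M)) := by
        refine Finset.sum_congr rfl fun k _ => ?_
        rw [← cramer_apply, cramer_eq_adjugate_mulVec]
        simp [Matrix.mulVec, dotProduct, Matrix.mul_apply, diagonal_apply]
    _ = Matrix.trace (Matrix.diagonal d * (M * M.adjugate)) := by
        rw [← trace_mul_comm, Matrix.mul_assoc]
    _ = (∑ j, d j) * M.det := by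
        simp [mul_adjugate, Matrix.trace, Finset.sum_mul, mul_comm]

def colHankel {R : Type*} {n : ℕ} (μ : ℕ → R) (c : Fin n → ℕ) :
    Matrix (Fin n) (Fin n) R :=
  Matrix.of fun j k => μ (j + c k)

section ColHankel

variable {R : Type*} {μ : ℕ → R} {n : ℕ}

@[simp] lemma colHankel_apply (c : Fin n → ℕ) (j k : Fin n) :
    colHankel μ c j k = μ (j + c k) := rfl

lemma updateCol_colHankel (c : Fin n → ℕ) (k : Fin n) (m : ℕ) :
    (colHankel μ c).updateCol k (fun j => μ (j + m)) = colHankel μ (update c k m) := by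
  ext j i
  rcases eq_or_ne i k with rfl | hik <;> simp [*]

variable [CommRing R]

lemma det_colHankel_update_eq_zero {c : Fin n → ℕ} {i k : Fin n} {m : ℕ} (hik : i ≠ k)
    (hm : c i = m) : (colHankel μ (update c k m)).det = 0 :=
  det_zero_of_column_eq hik fun j => by simp [update_of_ne hik, hm]

lemma det_colHankel_comp_perm (c : Fin n → ℕ) (σ : Equiv.Perm (Fin n)) :
    (colHankel μ (c ∘ σ)).det = Equiv.Perm.sign σ * (colHankel μ c).det :=
  det_permute' σ (colHankel μ c)

lemma det_colHankel_update_of_eq_sum {c : Fin n → ℕ} {m : ℕ} {a : Fin n → R}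
    (h : ∀ j : Fin n, μ (j + m) = ∑ i, a i * μ (j + c i)) (k : Fin n) :
    (colHankel μ (update c k m)).det = a k * (colHankel μ c).det := by
  rw [← updateCol_colHankel, ← smul_eq_mul, ← det_updateCol_sum]
  simp [h]

end ColHankel

theorem hasDerivAt_det_colHankel {n : ℕ} {μ : ℝ → ℕ → ℝ} {r s t : ℝ}
    (hμ : ∀ m, HasDerivAt (fun u => μ u m) (r * ((s + m) * μ t m - μ t (m + 1))) t)
    (c : Fin n → ℕ) :
    HasDerivAt (fun u => (colHankel (μ u) c).det)
      (r * ((n * s + ∑ k, (c k : ℝ) + ∑ j : Fin n, ((j : ℕ) : ℝ))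
          * (colHankel (μ t) c).det
        - ∑ k, (colHankel (μ t) (update c k (c k + 1))).det)) t := by
  set M := colHankel (μ t) c
  have hcol (k : Fin n) :
      (M.updateCol k fun j => r * ((s + ((j + c k : ℕ) : ℝ)) * μ t (j + c k)
        - μ t (j + c k + 1))).det
      = r * ((s + c k) * M.det + (M.updateCol k fun j => ((j : ℕ) : ℝ) * M j k).det
        - (colHankel (μ t) (update c k (c k + 1))).det) := by
    have hv : (fun j : Fin n =>
          r * ((s + ((j + c k : ℕ) : ℝ)) * μ t (j + c k) - μ t (j + c k + 1)))
        = r • ((s + c k) • (fun j => M j k) + (fun j : Fin n => ((j : ℕ) : ℝ) * M j k)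
          + (-1 : ℝ) • fun j : Fin n => μ t (j + (c k + 1))) := by
      funext j
      simp only [M, colHankel_apply, Pi.smul_apply, Pi.add_apply, smul_eq_mul, ← Nat.add_assoc]
      push_cast
      ring
    rw [hv, det_updateCol_smul, det_updateCol_add, det_updateCol_add, det_updateCol_smul,
      det_updateCol_smul, updateCol_eq_self, updateCol_colHankel]
    ring
  refine (hasDerivAt_det (A := fun u => colHankel (μ u) c)
    fun j k => hμ (j + c k)).congr_deriv ?_
  change ∑ k, (M.updateCol k _).det = _
  simp only [hcol, ← Finset.mul_sum, Finset.sum_sub_distrib, Finset.sum_add_distrib,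
    ← Finset.sum_mul, sum_det_updateCol_mul, Finset.sum_const, Finset.card_univ, Fintype.card_fin,
    nsmul_eq_mul]
  ring

section Hankel

variable {R : Type*} [CommRing R] {μ : ℕ → R} {n : ℕ}

lemma sum_det_colHankel_update_val_succ :
    ∑ k : Fin (n + 1), (colHankel μ (update Fin.val k (k + 1 : ℕ))).det
      = (colHankel μ (update Fin.val (Fin.last n) (n + 1))).det := by
  rw [Fintype.sum_eq_single (Fin.last n) fun k hk => ?_]
  · simp
  have hk' : (k : ℕ) < n := Fin.val_lt_last hk
  exact det_colHankel_update_eq_zero (i := ⟨k + 1, by omega⟩) (by simp [Fin.ext_iff]) rfl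

lemma det_colHankel_update_val_last_add_two {a : Fin (n + 1) → R} {b : Fin (n + 2) → R}
    (ha : ∀ j : Fin (n + 1), μ (j + (n + 1)) = ∑ i, a i * μ (j + i))
    (hb : ∀ j : Fin (n + 1), μ (j + (n + 2)) = ∑ i, b i * μ (j + i)) :
    (colHankel μ (update Fin.val (Fin.last n) (n + 2))).det
      = (b (Fin.castSucc (Fin.last n)) + b (Fin.last (n + 1)) * a (Fin.last n))
        * (colHankel μ (Fin.val : Fin (n + 1) → ℕ)).det := by
  refine det_colHankel_update_of_eq_sum (a := fun i => b i.castSucc + b (Fin.last (n + 1)) * a i)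
    (fun j => ?_) _
  rw [hb, Fin.sum_univ_castSucc, Fin.val_last, ha, Finset.mul_sum, ← Finset.sum_add_distrib]
  refine Finset.sum_congr rfl fun i _ => ?_
  simp only [Fin.val_castSucc]
  ring

lemma det_colHankel_update_update_of_eq_sum {a : Fin (n + 2) → R}
    (h : ∀ j : Fin (n + 2), μ (j + (n + 2)) = ∑ i, a i * μ (j + i)) :
    (colHankel μ (update (update Fin.val (Fin.last (n + 1)) (n + 2)) (Fin.last n).castSucc
      (n + 1))).det
      = -a (Fin.last n).castSucc * (colHankel μ (Fin.val : Fin (n + 2) → ℕ)).det := by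
  have hne : (Fin.last n).castSucc ≠ Fin.last (n + 1) := (Fin.castSucc_lt_last _).ne
  -- after swapping the last two columns, `h` expresses the new last column through the others
  set σ := Equiv.swap (Fin.last n).castSucc (Fin.last (n + 1))
  have hupd : update (update Fin.val (Fin.last (n + 1)) (n + 2)) (Fin.last n).castSucc (n + 1)
      = update (Fin.val ∘ σ) (Fin.last (n + 1)) (n + 2) := by
    ext k
    rcases eq_or_ne k (Fin.last (n + 1)) with rfl | hk
    · simp [hne.symm]
    rcases eq_or_ne k (Fin.last n).castSucc with rfl | hk'
    · simp [hne, σ]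
    · simp [hk, hk', σ, Equiv.swap_apply_of_ne_of_ne]
  have hrel (j : Fin (n + 2)) :
      μ (j + (n + 2)) = ∑ i, (a ∘ σ) i * μ (j + (Fin.val ∘ σ) i) := by
    rw [h, ← Equiv.sum_comp σ]; rfl
  rw [hupd, det_colHankel_update_of_eq_sum hrel, det_colHankel_comp_perm,
    Equiv.Perm.sign_swap hne]
  simp [σ]

/-- `(X * P).coeff n` is `P.coeff (n - 1)` for `n ≥ 1`, and `0` for `n = 0`, where the sum has
the single term `k = Fin.last 0`. -/
lemma sum_det_colHankel_update_last_succ {P : R[X]}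
    (hP : ∀ j : Fin (n + 1), μ (j + (n + 1)) = ∑ i : Fin (n + 1), -P.coeff i * μ (j + i)) :
    ∑ k, (colHankel μ (update (update Fin.val (Fin.last n) (n + 1)) k
        (update (Fin.val : Fin (n + 1) → ℕ) (Fin.last n) (n + 1) k + 1))).det
      = (colHankel μ (update Fin.val (Fin.last n) (n + 2))).det
        + (X * P).coeff n * (colHankel μ (Fin.val : Fin (n + 1) → ℕ)).det := by
  cases n with
  | zero => simp
  | succ m =>
    rw [Fin.sum_univ_castSucc, Fintype.sum_eq_single (Fin.last m) fun k hk => ?_]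
    · have hne : (Fin.last m).castSucc ≠ Fin.last (m + 1) := (Fin.castSucc_lt_last _).ne
      simp only [update_of_ne hne, update_self, update_idem, Fin.val_castSucc, Fin.val_last,
        add_assoc, Nat.reduceAdd] at hP ⊢
      rw [det_colHankel_update_update_of_eq_sum hP, coeff_X_mul, Fin.val_castSucc, Fin.val_last]
      ring
    · have hk' : (k : ℕ) < m := Fin.val_lt_last hk
      have hi : (⟨k + 1, by omega⟩ : Fin (m + 2)) ≠ Fin.last (m + 1) := by
        simp [Fin.ext_iff]; omega
      exact det_colHankel_update_eq_zero (i := ⟨k + 1, by omega⟩) (by simp [Fin.ext_iff])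
        (by rw [update_of_ne hi, update_of_ne (Fin.castSucc_lt_last k).ne]; rfl)

end Hankel

lemma Fin.sum_cast_val (n : ℕ) : ∑ j : Fin (n + 1), ((j : ℕ) : ℝ) = n * (n + 1) / 2 := by
  have h := Finset.sum_range_id_mul_two (n + 1)
  rw [Nat.add_sub_cancel, mul_comm (n + 1)] at h
  rw [Fin.sum_univ_eq_sum_range (fun j => (j : ℝ)), ← Nat.cast_sum, eq_div_iff two_ne_zero]
  exact_mod_cast h

section HankelDeriv

variable {n : ℕ} {μ : ℝ → ℕ → ℝ} {r s t : ℝ}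

theorem hasDerivAt_det_hankel
    (hμ : ∀ m, HasDerivAt (fun u => μ u m) (r * ((s + m) * μ t m - μ t (m + 1))) t) :
    HasDerivAt (fun u => (colHankel (μ u) (Fin.val : Fin (n + 1) → ℕ)).det)
      (r * ((n + 1) * (n + s) * (colHankel (μ t) (Fin.val : Fin (n + 1) → ℕ)).det
        - (colHankel (μ t) (update Fin.val (Fin.last n) (n + 1))).det)) t := by
  refine (hasDerivAt_det_colHankel hμ Fin.val).congr_deriv ?_
  rw [sum_det_colHankel_update_val_succ, Fin.sum_cast_val]
  push_cast
  ring

theorem hasDerivAt_det_hankel_update_last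
    (hμ : ∀ m, HasDerivAt (fun u => μ u m) (r * ((s + m) * μ t m - μ t (m + 1))) t)
    {P : ℝ[X]}
    (hP : ∀ j : Fin (n + 1),
      μ t (j + (n + 1)) = ∑ i : Fin (n + 1), -P.coeff i * μ t (j + i)) :
    HasDerivAt (fun u =>
        (colHankel (μ u) (update (Fin.val : Fin (n + 1) → ℕ) (Fin.last n) (n + 1))).det)
      (r * (((n + 1) * (n + s) + 1) * (colHankel (μ t) (update Fin.val (Fin.last n) (n + 1))).det
        - ((colHankel (μ t) (update Fin.val (Fin.last n) (n + 2))).det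
          + (X * P).coeff n * (colHankel (μ t) (Fin.val : Fin (n + 1) → ℕ)).det))) t := by
  have hsum : ∑ k, ((update (Fin.val : Fin (n + 1) → ℕ) (Fin.last n) (n + 1) k : ℕ) : ℝ)
      = ∑ k : Fin (n + 1), ((k : ℕ) : ℝ) + 1 := by
    simp [Fin.sum_univ_castSucc]
    ring
  refine (hasDerivAt_det_colHankel hμ _).congr_deriv ?_
  rw [sum_det_colHankel_update_last_succ hP, hsum, Fin.sum_cast_val]
  push_cast
  ring

end HankelDeriv

noncomputable def momentFunctional {R : Type*} [CommSemiring R] (μ : ℕ → R) :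
    R[X] →ₗ[R] R :=
  Polynomial.lsum fun i => LinearMap.mulRight R (μ i)

section MomentFunctional

variable {R : Type*} [CommRing R] {μ : ℕ → R}

@[simp] lemma momentFunctional_monomial (m : ℕ) (a : R) :
    momentFunctional μ (monomial m a) = a * μ m := by
  simp [momentFunctional]

lemma momentFunctional_X_pow_mul (j : ℕ) (q : R[X]) :
    momentFunctional μ (X ^ j * q)
      = ∑ i ∈ range (q.natDegree + 1), q.coeff i * μ (j + i) := by
  conv_lhs => rw [q.as_sum_range_C_mul_X_pow]
  simp only [Finset.mul_sum, map_sum]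
  refine sum_congr rfl fun i _ => ?_
  rw [mul_left_comm, ← pow_add, C_mul_X_pow_eq_monomial, momentFunctional_monomial]

lemma momentFunctional_apply (q : R[X]) :
    momentFunctional μ q = ∑ i ∈ range (q.natDegree + 1), q.coeff i * μ i := by
  simpa using momentFunctional_X_pow_mul (μ := μ) 0 q

lemma add_natDegree_eq_sum_of_momentFunctional_eq_zero {P : R[X]} {d j : ℕ} (hP : P.Monic)
    (hd : P.natDegree = d) (h : momentFunctional μ (X ^ j * P) = 0) :
    μ (j + d) = ∑ i : Fin d, -P.coeff i * μ (j + i) := by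
  have hlead : P.coeff d = 1 := hd ▸ hP.coeff_natDegree
  rw [momentFunctional_X_pow_mul, hd, sum_range_succ, hlead, one_mul] at h
  rw [Fin.sum_univ_eq_sum_range (fun i => -P.coeff i * μ (j + i)) d]
  simp only [neg_mul, sum_neg_distrib]
  linear_combination h

lemma momentFunctional_mul_eq_zero_of_natDegree_lt [Nontrivial R] {p : ℕ → R[X]}
    (hmonic : ∀ k, (p k).Monic) (hdeg : ∀ k, (p k).natDegree = k)
    (horth : ∀ j k, j ≠ k → momentFunctional μ (p j * p k) = 0) {m : ℕ} {q : R[X]}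
    (hq : q.natDegree < m) : momentFunctional μ (p m * q) = 0 := by
  let S : Sequence R := ⟨p, fun k => by rw [degree_eq_natDegree (hmonic k).ne_zero, hdeg k]⟩
  have hspan : Submodule.span R (S '' Set.Iio m)
      ≤ LinearMap.ker (momentFunctional μ ∘ₗ LinearMap.mulLeft R (p m)) := by
    rw [Submodule.span_le]
    rintro _ ⟨k, hk, rfl⟩
    exact horth m k (ne_of_gt hk)
  have hmem : q ∈ degreeLT R m :=
    mem_degreeLT.mpr ((degree_le_natDegree).trans_lt (by exact_mod_cast hq))
  rw [← S.span_degreeLT fun k _ => by simp [S, (hmonic k).leadingCoeff]] at hmem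
  exact hspan hmem

end MomentFunctional

lemma Polynomial.eq_of_X_mul_eq_add_C_mul {R : Type*} [CommRing R] {P₀ P₁ P₂ : R[X]} {a b : R}
    {n : ℕ} (h₀ : P₀.Monic) (hd₀ : P₀.natDegree = n) (h₁ : P₁.Monic)
    (hd₁ : P₁.natDegree = n + 1)
    (hrec : X * P₁ = P₂ + C a * P₁ + C b * P₀) :
    b = (X * P₁).coeff n - P₂.coeff n - (P₁.coeff n - P₂.coeff (n + 1)) * P₁.coeff n := by
  have e₁ := congrArg (coeff · (n + 1)) hrec
  have e₀ := congrArg (coeff · n) hrec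
  simp only [coeff_add, coeff_C_mul, coeff_X_mul] at e₁ e₀
  have c₁ : P₁.coeff (n + 1) = 1 := hd₁ ▸ h₁.coeff_natDegree
  have c₀ : P₀.coeff n = 1 := hd₀ ▸ h₀.coeff_natDegree
  rw [c₁, coeff_eq_zero_of_natDegree_lt (by omega : P₀.natDegree < n + 1)] at e₁
  rw [c₀] at e₀
  linear_combination P₁.coeff n * e₁ - e₀

lemma add_mul_deriv_mul_deriv_log_sub_eq {D T : ℝ → ℝ} {I : Set ℝ} {N S t : ℝ}
    (hI : IsOpen I) (hI0 : (0 : ℝ) ∉ I) (ht : t ∈ I) (hD0 : ∀ u ∈ I, D u ≠ 0)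
    (hD : ∀ u ∈ I, HasDerivAt D (u⁻¹ * (N * D u - T u)) u)
    (hT : HasDerivAt T (t⁻¹ * ((N + 1) * T t - S)) t) :
    N + t * deriv (fun u => u * deriv (fun v => Real.log (D v)) u) t
      - t * deriv (fun v => Real.log (D v)) t = S / D t - (T t / D t) ^ 2 := by
  have hlog (u) (hu : u ∈ I) :
      HasDerivAt (fun v => Real.log (D v)) (u⁻¹ * (N * D u - T u) / D u) u :=
    (hD u hu).log (hD0 u hu)
  have hH : (fun u => u * deriv (fun v => Real.log (D v)) u) =ᶠ[nhds t]
      fun u => N - T u / D u := by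
    filter_upwards [hI.mem_nhds ht] with u hu
    have hu0 : u ≠ 0 := fun h => hI0 (h ▸ hu)
    rw [(hlog u hu).deriv]
    field_simp [hD0 u hu]
  have ht0 : t ≠ 0 := fun h => hI0 (h ▸ ht)
  rw [hH.deriv_eq, ((hT.fun_div (hD t ht) (hD0 t ht)).const_sub N).deriv, (hlog t ht).deriv]
  field_simp [hD0 t ht]
  ring

namespace Real

lemma rpow_le_rpow_add_rpow {a b y c : ℝ} (ha : 0 < a) (hay : a ≤ y) (hyb : y ≤ b) :
    y ^ c ≤ a ^ c + b ^ c := by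
  rcases le_total 0 c with hc | hc
  · linarith [rpow_le_rpow (ha.le.trans hay) hyb hc, rpow_nonneg ha.le c]
  · linarith [rpow_le_rpow_of_nonpos ha hay hc, rpow_nonneg (ha.le.trans (hay.trans hyb)) c]

lemma add_rpow_le_two_rpow_abs_mul {x t c : ℝ} (hx : 0 < x) (ht : 0 < t) :
    (x + t) ^ c ≤ 2 ^ |c| * (t ^ c + x ^ |c|) := by
  rcases le_total 0 c with hc | hc
  · rw [abs_of_nonneg hc]
    have hmax : max x t ^ c ≤ t ^ c + x ^ c := by
      rcases le_total x t with h | h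
      · rw [max_eq_right h]; linarith [rpow_nonneg hx.le c]
      · rw [max_eq_left h]; linarith [rpow_nonneg ht.le c]
    calc (x + t) ^ c ≤ (2 * max x t) ^ c :=
          rpow_le_rpow (by positivity) (by linarith [le_max_left x t, le_max_right x t]) hc
      _ = 2 ^ c * max x t ^ c := mul_rpow zero_le_two (hx.le.trans (le_max_left x t))
      _ ≤ 2 ^ c * (t ^ c + x ^ c) := by gcongr
  · calc (x + t) ^ c ≤ t ^ c := rpow_le_rpow_of_nonpos ht (by linarith) hc
      _ ≤ 2 ^ |c| * (t ^ c + x ^ |c|) := by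
        nlinarith [one_le_rpow one_le_two (abs_nonneg c), rpow_nonneg ht.le c,
          rpow_nonneg hx.le |c|]

end Real

noncomputable def laguerreWeight (α lam t x : ℝ) : ℝ := (x + t) ^ lam * x ^ α * Real.exp (-x)

noncomputable def laguerreMoment (α lam t : ℝ) (m : ℕ) : ℝ :=
  ∫ x in Ioi 0, x ^ m * laguerreWeight α lam t x

section LaguerreMoment

variable {α lam t : ℝ}

lemma laguerreWeight_pos (ht : 0 ≤ t) {x : ℝ} (hx : 0 < x) : 0 < laguerreWeight α lam t x := by
  unfold laguerreWeight
  have : 0 < x + t := by linarith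
  positivity

lemma continuousOn_pow_mul_laguerreWeight (ht : 0 ≤ t) (m : ℕ) :
    ContinuousOn (fun x => x ^ m * laguerreWeight α lam t x) (Ioi 0) := by
  intro x (hx : 0 < x)
  unfold laguerreWeight
  apply ContinuousAt.continuousWithinAt
  have hxt : x + t ≠ 0 := by linarith
  fun_prop (disch := first | exact Or.inl hx.ne' | exact Or.inl hxt)

lemma integrableOn_pow_mul_laguerreWeight (hα : -1 < α) (ht : 0 < t) (m : ℕ) :
    IntegrableOn (fun x => x ^ m * laguerreWeight α lam t x) (Ioi 0) := by
  have hm : (0 : ℝ) ≤ m := m.cast_nonneg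
  have hγ₁ := Real.GammaIntegral_convergent (s := m + α + 1) (by linarith)
  have hγ₂ := Real.GammaIntegral_convergent (s := m + α + |lam| + 1)
    (by linarith [abs_nonneg lam])
  refine Integrable.mono' ((hγ₁.const_mul (t ^ lam)).add hγ₂ |>.const_mul (2 ^ |lam|))
    ((continuousOn_pow_mul_laguerreWeight ht.le m).aestronglyMeasurable measurableSet_Ioi) ?_
  filter_upwards [ae_restrict_mem measurableSet_Ioi] with x (hx : 0 < x)
  have hw := laguerreWeight_pos (α := α) (lam := lam) ht.le hx
  have e₁ : x ^ m * x ^ α = x ^ ((m : ℝ) + α + 1 - 1) := by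
    rw [add_sub_cancel_right, Real.rpow_add hx, Real.rpow_natCast]
  have e₂ : x ^ m * x ^ α * x ^ |lam| = x ^ ((m : ℝ) + α + |lam| + 1 - 1) := by
    rw [add_sub_cancel_right, Real.rpow_add hx, Real.rpow_add hx, Real.rpow_natCast]
  have hbound := Real.add_rpow_le_two_rpow_abs_mul (c := lam) hx ht
  rw [Real.norm_of_nonneg (by positivity)]
  calc x ^ m * laguerreWeight α lam t x
      ≤ x ^ m * (2 ^ |lam| * (t ^ lam + x ^ |lam|) * x ^ α * Real.exp (-x)) := by
        unfold laguerreWeight; gcongr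
    _ = 2 ^ |lam| * (t ^ lam * (Real.exp (-x) * (x ^ m * x ^ α))
          + Real.exp (-x) * (x ^ m * x ^ α * x ^ |lam|)) := by ring
    _ = _ := by rw [e₂, e₁]; rfl

lemma laguerreWeight_eq_mul_sub_one {x : ℝ} (hxt : 0 < x + t) :
    laguerreWeight α lam t x = (x + t) * laguerreWeight α (lam - 1) t x := by
  unfold laguerreWeight
  rw [Real.rpow_sub_one hxt.ne']
  field_simp

lemma hasDerivAt_laguerreWeight {x : ℝ} (hxt : 0 < x + t) :
    HasDerivAt (fun u => laguerreWeight α lam u x) (lam * laguerreWeight α (lam - 1) t x) t := by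
  have h := (((hasDerivAt_id t).const_add x).rpow_const (p := lam) (Or.inl hxt.ne')).mul_const
    (x ^ α * Real.exp (-x))
  have hfun : (fun u => laguerreWeight α lam u x)
      = fun u => (x + id u) ^ lam * (x ^ α * Real.exp (-x)) := by
    funext u; simp only [laguerreWeight, id]; ring
  rw [hfun]
  exact h.congr_deriv (by simp only [laguerreWeight, id]; ring)

lemma hasDerivAt_laguerreMoment' (hα : -1 < α) (ht : 0 < t) (m : ℕ) :
    HasDerivAt (fun u => laguerreMoment α lam u m) (lam * laguerreMoment α (lam - 1) t m) t := by
  have ht2 : 0 < t / 2 := by linarith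
  have key := hasDerivAt_integral_of_dominated_loc_of_deriv_le (μ := volume.restrict (Ioi 0))
    (F := fun u x => x ^ m * laguerreWeight α lam u x)
    (F' := fun u x => lam * (x ^ m * laguerreWeight α (lam - 1) u x))
    (bound := fun x => |lam| * (x ^ m * laguerreWeight α (lam - 1) (t / 2) x
      + x ^ m * laguerreWeight α (lam - 1) (2 * t) x))
    (Metric.ball_mem_nhds t ht2) ?meas ?int ?meas' ?bound ?bound_int ?diff
  · rw [integral_const_mul] at key
    exact key.2
  case meas =>
    filter_upwards [Ioi_mem_nhds ht] with u (hu : 0 < u)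
    exact (continuousOn_pow_mul_laguerreWeight hu.le m).aestronglyMeasurable measurableSet_Ioi
  case int => exact integrableOn_pow_mul_laguerreWeight hα ht m
  case meas' =>
    exact ((continuousOn_pow_mul_laguerreWeight ht.le m).aestronglyMeasurable
      measurableSet_Ioi).const_mul lam
  case bound =>
    filter_upwards [ae_restrict_mem measurableSet_Ioi] with x (hx : 0 < x) u hu
    rw [Metric.mem_ball, Real.dist_eq, abs_lt] at hu
    have hw := Real.rpow_le_rpow_add_rpow (c := lam - 1) (by linarith : 0 < x + t / 2)
      (by linarith : x + t / 2 ≤ x + u) (by linarith : x + u ≤ x + 2 * t)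
    have hpos := laguerreWeight_pos (α := α) (lam := lam - 1) (by linarith : 0 ≤ u) hx
    rw [norm_mul, Real.norm_eq_abs, Real.norm_of_nonneg (by positivity)]
    gcongr
    simp only [laguerreWeight]
    rw [← mul_add, ← add_mul, ← add_mul]
    gcongr
  case bound_int =>
    exact ((integrableOn_pow_mul_laguerreWeight hα ht2 m).add
      (integrableOn_pow_mul_laguerreWeight hα (by linarith) m)).const_mul _
  case diff =>
    filter_upwards [ae_restrict_mem measurableSet_Ioi] with x (hx : 0 < x) u hu
    rw [Metric.mem_ball, Real.dist_eq, abs_lt] at hu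
    exact ((hasDerivAt_laguerreWeight (by linarith)).const_mul (x ^ m)).congr_deriv (by ring)

lemma laguerreMoment_eq_succ_add_mul (hα : -1 < α) (ht : 0 < t) (m : ℕ) :
    laguerreMoment α lam t m
      = laguerreMoment α (lam - 1) t (m + 1) + t * laguerreMoment α (lam - 1) t m := by
  rw [laguerreMoment, laguerreMoment, laguerreMoment, ← integral_const_mul,
    ← integral_add (integrableOn_pow_mul_laguerreWeight hα ht _)
      ((integrableOn_pow_mul_laguerreWeight hα ht _).const_mul t)]
  refine setIntegral_congr_fun measurableSet_Ioi fun x (hx : 0 < x) => ?_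
  rw [laguerreWeight_eq_mul_sub_one (by linarith)]
  ring

lemma mul_laguerreMoment_sub_one_succ (hα : -1 < α) (ht : 0 < t) (m : ℕ) :
    lam * laguerreMoment α (lam - 1) t (m + 1)
      = laguerreMoment α lam t (m + 1) - (m + α + 1) * laguerreMoment α lam t m := by
  have he : 0 < m + α + 1 := by linarith [(m.cast_nonneg : (0 : ℝ) ≤ m)]
  set g : ℝ → ℝ := fun x => x ^ (m + α + 1) * ((x + t) ^ lam * Real.exp (-x))
  set g' : ℝ → ℝ := fun x => (m + α + 1) * (x ^ m * laguerreWeight α lam t x)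
      + lam * (x ^ (m + 1) * laguerreWeight α (lam - 1) t x)
      - x ^ (m + 1) * laguerreWeight α lam t x
  have hg : ∀ x ∈ Ioi (0 : ℝ), g x = x ^ (m + 1) * laguerreWeight α lam t x := fun x hx => by
    simp only [g, laguerreWeight]
    rw [Real.rpow_add hx, Real.rpow_add hx, Real.rpow_natCast, Real.rpow_one]
    ring
  have hderiv : ∀ x ∈ Ioi (0 : ℝ), HasDerivAt g (g' x) x := fun x (hx : 0 < x) => by
    have hxt : 0 < x + t := by linarith
    have h := (Real.hasDerivAt_rpow_const (p := m + α + 1) (Or.inl hx.ne')).fun_mul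
      (((hasDerivAt_id x).add_const t).rpow_const (p := lam) (Or.inl hxt.ne') |>.fun_mul
        (hasDerivAt_neg x).exp)
    refine h.congr_deriv ?_
    have e₁ : x ^ ((m : ℝ) + α + 1 - 1) = x ^ m * x ^ α := by
      rw [add_sub_cancel_right, Real.rpow_add hx, Real.rpow_natCast]
    have e₂ : x ^ ((m : ℝ) + α + 1) = x ^ (m + 1) * x ^ α := by
      rw [Real.rpow_add hx, Real.rpow_add hx, Real.rpow_natCast, Real.rpow_one, pow_succ]; ring
    simp only [g', laguerreWeight, id, e₁, e₂, Real.rpow_sub_one hxt.ne']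
    field_simp
    ring
  have hint : IntegrableOn g' (Ioi 0) :=
    ((integrableOn_pow_mul_laguerreWeight hα ht m).const_mul _).add
      ((integrableOn_pow_mul_laguerreWeight hα ht (m + 1)).const_mul _)
      |>.sub (integrableOn_pow_mul_laguerreWeight hα ht (m + 1))
  have hlim : Filter.Tendsto g Filter.atTop (nhds 0) :=
    tendsto_zero_of_hasDerivAt_of_integrableOn_Ioi hderiv hint
      ((integrableOn_pow_mul_laguerreWeight hα ht (m + 1)).congr_fun (fun x hx => (hg x hx).symm)
        measurableSet_Ioi)
  have hcont : ContinuousWithinAt g (Ici 0) 0 := by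
    apply ContinuousAt.continuousWithinAt
    have : (0 : ℝ) + t ≠ 0 := by simpa using ht.ne'
    fun_prop (disch := first | exact Or.inr he.le | exact Or.inl this)
  -- integration by parts: `g = x ^ (m + 1) * w` vanishes at `0` and at `∞`
  have hFTC := integral_Ioi_of_hasDerivAt_of_tendsto hcont hderiv hint hlim
  simp only [g, Real.zero_rpow he.ne', zero_mul, sub_zero, g'] at hFTC
  rw [integral_sub ?_ ?_, integral_add ?_ ?_, integral_const_mul, integral_const_mul] at hFTC
  · simp only [laguerreMoment]
    linarith
  all_goals first
    | exact (integrableOn_pow_mul_laguerreWeight hα ht _).const_mul _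
    | exact integrableOn_pow_mul_laguerreWeight hα ht _
    | exact ((integrableOn_pow_mul_laguerreWeight hα ht _).const_mul _).add
        ((integrableOn_pow_mul_laguerreWeight hα ht _).const_mul _)

theorem hasDerivAt_laguerreMoment (hα : -1 < α) (ht : 0 < t) (m : ℕ) :
    HasDerivAt (fun u => laguerreMoment α lam u m)
      (t⁻¹ * ((lam + α + 1 + m) * laguerreMoment α lam t m
        - laguerreMoment α lam t (m + 1))) t := by
  refine (hasDerivAt_laguerreMoment' hα ht m).congr_deriv ?_
  have hsplit := laguerreMoment_eq_succ_add_mul (lam := lam) hα ht m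
  have hibp := mul_laguerreMoment_sub_one_succ (lam := lam) hα ht m
  rw [eq_inv_mul_iff_mul_eq₀ ht.ne']
  linear_combination (-lam) * hsplit - hibp

end LaguerreMoment

section LaguerreOrthogonality

variable {α lam t : ℝ}

lemma integral_eval_mul_laguerreWeight (hα : -1 < α) (ht : 0 < t) (q : ℝ[X]) :
    ∫ x in Ioi 0, q.eval x * laguerreWeight α lam t x
      = momentFunctional (laguerreMoment α lam t) q := by
  simp only [eval_eq_sum_range, Finset.sum_mul, mul_assoc, momentFunctional_apply]
  rw [integral_finsetSum _ fun i _ => (integrableOn_pow_mul_laguerreWeight hα ht i).const_mul _]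
  simp only [integral_const_mul, laguerreMoment]

lemma laguerreMoment_add_eq_sum (hα : -1 < α) (ht : 0 < t) {p : ℕ → ℝ[X]}
    (hmonic : ∀ k, (p k).Monic) (hdeg : ∀ k, (p k).natDegree = k)
    (horth : ∀ j k, j ≠ k →
      ∫ x in Ioi 0, (p j).eval x * (p k).eval x * laguerreWeight α lam t x = 0)
    {j m : ℕ} (hj : j < m) :
    laguerreMoment α lam t (j + m)
      = ∑ i : Fin m, -(p m).coeff i * laguerreMoment α lam t (j + i) := by
  refine add_natDegree_eq_sum_of_momentFunctional_eq_zero (hmonic m) (hdeg m) ?_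
  rw [mul_comm]
  refine momentFunctional_mul_eq_zero_of_natDegree_lt hmonic hdeg (fun j k hjk => ?_) (by simpa)
  rw [← integral_eval_mul_laguerreWeight hα ht]
  simpa only [eval_mul] using horth j k hjk

theorem laguerre_hankel_logDeriv_eq_coeff {n : ℕ} {α lam t : ℝ} (hα : -1 < α) {I : Set ℝ}
    (hI : IsOpen I) (hIpos : I ⊆ Ioi 0) (ht : t ∈ I) {D : ℝ → ℝ}
    (hD : ∀ u ∈ I,
      D u = (colHankel (laguerreMoment α lam u) (Fin.val : Fin (n + 1) → ℕ)).det)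
    (hD0 : ∀ u ∈ I, D u ≠ 0) {p : ℕ → ℝ[X]} (hmonic : ∀ k, (p k).Monic)
    (hdeg : ∀ k, (p k).natDegree = k)
    (horth : ∀ j k, j ≠ k →
      ∫ x in Ioi 0, (p j).eval x * (p k).eval x * laguerreWeight α lam t x = 0) :
    ((n + 1 : ℕ) : ℝ) * ((n + 1 : ℕ) + α + lam)
        + t * deriv (fun u => u * deriv (fun v => Real.log (D v)) u) t
        - t * deriv (fun v => Real.log (D v)) t
      = (X * p (n + 1)).coeff n - (p (n + 2)).coeff n
        + (p (n + 2)).coeff (n + 1) * (p (n + 1)).coeff n - (p (n + 1)).coeff n ^ 2 := by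
  have hI0 : (0 : ℝ) ∉ I := fun h0 => lt_irrefl 0 (mem_Ioi.mp (hIpos h0))
  have hμ (u) (hu : u ∈ I) := fun m => hasDerivAt_laguerreMoment (lam := lam) hα (hIpos hu) m
  have hP (j : Fin (n + 1)) := laguerreMoment_add_eq_sum hα (hIpos ht) hmonic hdeg horth
    (m := n + 1) j.isLt
  have hQ (j : Fin (n + 1)) := laguerreMoment_add_eq_sum hα (hIpos ht) hmonic hdeg horth
    (m := n + 2) (by omega : (j : ℕ) < n + 2)
  have hD' (u) (hu : u ∈ I) :
      HasDerivAt D (u⁻¹ * (((n + 1 : ℕ) : ℝ) * ((n + 1 : ℕ) + α + lam) * D u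
        - (colHankel (laguerreMoment α lam u) (update Fin.val (Fin.last n) (n + 1))).det)) u :=
    (hasDerivAt_det_hankel (hμ u hu)).congr_of_eventuallyEq
      (Filter.eventually_of_mem (hI.mem_nhds hu) hD) |>.congr_deriv
        (by rw [hD u hu]; push_cast; ring)
  have hT := hasDerivAt_det_hankel_update_last (hμ t ht) hP
  rw [add_mul_deriv_mul_deriv_log_sub_eq hI hI0 ht hD0 hD'
      (S := (colHankel (laguerreMoment α lam t) (update Fin.val (Fin.last n) (n + 2))).det
        + (X * p (n + 1)).coeff n * D t) (hT.congr_deriv (by rw [hD t ht]; push_cast; ring)),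
    det_colHankel_update_val_last_add_two hP hQ, det_colHankel_update_of_eq_sum hP, ← hD t ht]
  simp only [Fin.val_last, Fin.val_castSucc]
  field_simp [hD0 t ht]
  ring

end LaguerreOrthogonality

theorem recurrence_coefficient_beta_eq_general
    (n : ℕ) (hn : 1 ≤ n) (α lam : ℝ) (hα : 0 < α)
    (I : Set ℝ) (hIopen : IsOpen I) (hIsub : I ⊆ Set.Ioi (0 : ℝ))
    (D : ℝ → ℝ)
    (hD : ∀ t ∈ I, D t = Matrix.det (fun j k : Fin n =>
        ∫ x in Set.Ioi (0 : ℝ),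
          x ^ ((j : ℕ) + (k : ℕ)) * ((x + t) ^ lam * x ^ α * Real.exp (-x))))
    (hDpos : ∀ t ∈ I, 0 < D t)
    (p : ℕ → ℝ → Polynomial ℝ) (h : ℕ → ℝ → ℝ) (a b : ℝ → ℝ)
    (hmonic : ∀ k, ∀ t ∈ I, (p k t).Monic)
    (hdeg : ∀ k, ∀ t ∈ I, (p k t).natDegree = k)
    (horth : ∀ j k, ∀ t ∈ I,
      ∫ x in Set.Ioi (0 : ℝ),
          (p j t).eval x * (p k t).eval x * ((x + t) ^ lam * x ^ α * Real.exp (-x))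
        = if j = k then h j t else 0)
    (hrec : ∀ t ∈ I, Polynomial.X * p n t
        = p (n + 1) t + Polynomial.C (a t) * p n t + Polynomial.C (b t) * p (n - 1) t) :
    ∀ t ∈ I,
      DifferentiableAt ℝ (fun u => u * deriv (fun v => Real.log (D v)) u) t →
      b t = n * (n + α + lam)
          + t * deriv (fun u => u * deriv (fun v => Real.log (D v)) u) t
          - t * deriv (fun v => Real.log (D v)) t := by
  intro t ht _
  obtain ⟨n, rfl⟩ : ∃ m, n = m + 1 := ⟨n - 1, by omega⟩
  have hrec' := hrec t ht
  rw [Nat.add_sub_cancel] at hrec'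
  have hb := eq_of_X_mul_eq_add_C_mul (hmonic n t ht) (hdeg n t ht) (hmonic (n + 1) t ht)
    (hdeg (n + 1) t ht) hrec'
  have hσ := laguerre_hankel_logDeriv_eq_coeff (by linarith) hIopen hIsub ht hD
    (fun u hu => (hDpos u hu).ne') (hmonic · t ht) (hdeg · t ht)
    (fun j k hjk => (horth j k t ht).trans (if_neg hjk))
  linear_combination hb - hσ

/-- Chen–McKay: with `H_n(t) = t (d/dt) log D_n(t;α,λ)`, the recurrence
coefficient `β_n(t)` of the monic orthogonal polynomials for the perturbed Laguerre
weight satisfies `β_n(t) = n(n + α + λ) + t H_n′(t) − H_n(t)` (whenever `H_n` is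
differentiable at `t`), on an open interval of `(0,∞)` where `D_n` is differentiable
and positive. -/
theorem recurrence_coefficient_beta_eq
    (n : ℕ) (hn : 1 ≤ n) (α lam : ℝ) (hα : 0 < α) (hsum : α + lam + 1 > 0)
    (I : Set ℝ) (hIopen : IsOpen I) (hIsub : I ⊆ Set.Ioi (0 : ℝ))
    (D : ℝ → ℝ)
    (hD : ∀ t ∈ I, D t = Matrix.det (fun j k : Fin n =>
        ∫ x in Set.Ioi (0 : ℝ),
          x ^ ((j : ℕ) + (k : ℕ)) * ((x + t) ^ lam * x ^ α * Real.exp (-x))))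
    (hDdiff : ∀ t ∈ I, DifferentiableAt ℝ D t)
    (hDpos : ∀ t ∈ I, 0 < D t)
    (p : ℕ → ℝ → Polynomial ℝ) (h : ℕ → ℝ → ℝ) (a b : ℝ → ℝ)
    (hmonic : ∀ k, ∀ t ∈ I, (p k t).Monic)
    (hdeg : ∀ k, ∀ t ∈ I, (p k t).natDegree = k)
    (hpos : ∀ k, ∀ t ∈ I, 0 < h k t)
    (horth : ∀ j k, ∀ t ∈ I,
      ∫ x in Set.Ioi (0 : ℝ),
          (p j t).eval x * (p k t).eval x * ((x + t) ^ lam * x ^ α * Real.exp (-x))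
        = if j = k then h j t else 0)
    (hrec : ∀ t ∈ I, Polynomial.X * p n t
        = p (n + 1) t + Polynomial.C (a t) * p n t + Polynomial.C (b t) * p (n - 1) t) :
    ∀ t ∈ I,
      DifferentiableAt ℝ (fun u => u * deriv (fun v => Real.log (D v)) u) t →
      b t = n * (n + α + lam)
          + t * deriv (fun u => u * deriv (fun v => Real.log (D v)) u) t
          - t * deriv (fun v => Real.log (D v)) t :=
  recurrence_coefficient_beta_eq_general n hn α lam hα I hIopen hIsub D hD hDpos p h a b hmonic hdeg
    horth hrec
end

section
/- (Lemma 1, third identity.) Let n ≥ 0, α > 0, λ ∈ ℝ with α + λ + 1 > 0. Suppose on an open interval I ⊂ (0,∞) the squared norm h_n(t) = ∫₀^∞ π_n(x;t)² w(x,t) dx of the monic orthogonal polynomial π_n(x;t) with respect to w(x,t) = (x+t)^λ x^α e^{−x} is differentiable in t, and set γ_n(t) = h_n(t)^{−1/2}. Then for t ∈ I, (d/dt) log γ_n(t) = −1/2 + (α/2) γ_n(t)² ∫₀^∞ π_n(x;t)² w(x,t)/x dx. -/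
/-!
Write `w(x,s) = (x+s)^λ x^α e^{-x}`. Since `π_n(·;s)` is orthogonal to all polynomials of lower
degree, it minimises `∫ q² w(·,s)` among monic `q` of degree `n`; hence
`s ↦ ∫ π_n(x;t)² w(x,s) dx - h_n(s)` has a local minimum at `s = t`, and
`h_n'(t) = λ ∫ π_n² (x+t)^{λ-1} x^α e^{-x} dx`. Integrating `∂ₓ(π_n² w)` over `(0,∞)`
(no boundary terms, as `α > 0`) and using `∫ π_n π_n' w = 0` turns this into
`h_n(t) - α ∫ π_n² w / x`, and `(log γ_n)' = -h_n' / (2 h_n)`.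
-/

open MeasureTheory Set Finset Polynomial Filter Topology

theorem Polynomial.IsMonicOfDegree.degree_sub_lt {p q : ℝ[X]} {n : ℕ} (hp : IsMonicOfDegree p n)
    (hq : IsMonicOfDegree q n) : (p - q).degree < n := by
  rw [degree_lt_iff_coeff_zero]
  intro m hm
  rw [coeff_sub, hp.coeff_eq hq hm, sub_self]

section Orthogonality

variable {μ : Measure ℝ} {w : ℝ → ℝ}

theorem integral_eval_mul_eval_mul_eq_zero_of_degree_lt
    (hint : ∀ q : ℝ[X], Integrable (fun x => q.eval x * w x) μ)
    {p : ℕ → ℝ[X]} (hp : ∀ k, IsMonicOfDegree (p k) k)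
    {q : ℝ[X]} {n : ℕ} (horth : ∀ k < n, ∫ x, q.eval x * (p k).eval x * w x ∂μ = 0)
    {r : ℝ[X]} (hr : r.degree < n) :
    ∫ x, q.eval x * r.eval x * w x ∂μ = 0 := by
  induction n generalizing r with
  | zero =>
    rw [Nat.cast_zero, Nat.WithBot.lt_zero_iff, degree_eq_bot] at hr
    simp [hr]
  | succ m ih =>
    set r' := r - C (r.coeff m) * p m
    have hr' : r'.degree < m := by
      rw [degree_lt_iff_coeff_zero] at hr ⊢
      intro i hi
      rcases hi.eq_or_lt with rfl | hi
      · simp [r', coeff_C_mul, ((isMonicOfDegree_iff _ _).mp (hp m)).2]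
      · have hpm : (p m).coeff i = 0 :=
          coeff_eq_zero_of_natDegree_lt ((hp m).natDegree_eq.trans_lt hi)
        simp [r', coeff_C_mul, hr i hi, hpm]
    have hint₂ : ∀ s : ℝ[X], Integrable (fun x => q.eval x * s.eval x * w x) μ := fun s => by
      simpa only [eval_mul] using hint (q * s)
    have hsplit : ∀ x, q.eval x * r.eval x * w x
        = r.coeff m * (q.eval x * (p m).eval x * w x) + q.eval x * r'.eval x * w x := by
      intro x; simp only [r', eval_sub, eval_mul, eval_C]; ring
    simp_rw [hsplit]
    rw [integral_add ((hint₂ _).const_mul _) (hint₂ _), integral_const_mul,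
      horth m m.lt_succ_self, ih (fun k hk => horth k (hk.trans m.lt_succ_self)) hr']
    ring

theorem integral_sq_mul_le_of_isMonicOfDegree (hw : ∀ᵐ x ∂μ, 0 ≤ w x)
    (hint : ∀ q : ℝ[X], Integrable (fun x => q.eval x * w x) μ)
    {P q : ℝ[X]} {n : ℕ} (hP : IsMonicOfDegree P n) (hq : IsMonicOfDegree q n)
    (horth : ∀ r : ℝ[X], r.degree < n → ∫ x, P.eval x * r.eval x * w x ∂μ = 0) :
    ∫ x, P.eval x ^ 2 * w x ∂μ ≤ ∫ x, q.eval x ^ 2 * w x ∂μ := by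
  set r := q - P
  have hint_sq : ∀ s : ℝ[X], Integrable (fun x => s.eval x ^ 2 * w x) μ := fun s => by
    have := hint (s ^ 2)
    simp only [eval_pow] at this
    exact this
  have hint_cross : Integrable (fun x => 2 * (P.eval x * r.eval x * w x)) μ := by
    simpa only [eval_mul, eval_ofNat, mul_assoc] using hint (2 * (P * r))
  have hsplit : ∀ x, q.eval x ^ 2 * w x
      = P.eval x ^ 2 * w x + (2 * (P.eval x * r.eval x * w x) + r.eval x ^ 2 * w x) := by
    intro x; simp only [r, eval_sub]; ring
  have hint_rest : Integrable
      (fun x => 2 * (P.eval x * r.eval x * w x) + r.eval x ^ 2 * w x) μ :=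
    hint_cross.add (hint_sq r)
  simp_rw [hsplit]
  rw [integral_add (hint_sq P) hint_rest,
    integral_add hint_cross (hint_sq r), integral_const_mul, horth r (hq.degree_sub_lt hP)]
  have : 0 ≤ ∫ x, r.eval x ^ 2 * w x ∂μ :=
    integral_nonneg_of_ae (hw.mono fun x hx => mul_nonneg (sq_nonneg _) hx)
  linarith

end Orthogonality

theorem HasDerivAt.eq_of_eventuallyLE_of_eq {f g : ℝ → ℝ} {f' g' t : ℝ}
    (hf : HasDerivAt f f' t) (hg : HasDerivAt g g' t) (hle : g ≤ᶠ[𝓝 t] f) (heq : g t = f t) :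
    f' = g' := by
  have hmin : IsLocalMin (f - g) t := by
    filter_upwards [hle] with s hs
    simp only [Pi.sub_apply, heq, sub_self, sub_nonneg, hs]
  linarith [hmin.hasDerivAt_eq_zero (hf.sub hg)]

theorem deriv_log_rpow {f : ℝ → ℝ} {t : ℝ} (r : ℝ) (hf : DifferentiableAt ℝ f t)
    (hpos : ∀ᶠ u in 𝓝 t, 0 < f u) :
    deriv (fun u => Real.log (f u ^ r)) t = r * deriv f t / f t := by
  have hev : (fun u => Real.log (f u ^ r)) =ᶠ[𝓝 t] fun u => r * Real.log (f u) := by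
    filter_upwards [hpos] with u hu
    rw [Real.log_rpow hu]
  rw [hev.deriv_eq, ((hf.hasDerivAt.log hpos.self_of_nhds.ne').const_mul r).deriv]
  ring

theorem Polynomial.exists_abs_eval_le_mul_one_add_pow (Q : ℝ[X]) :
    ∃ C, ∀ x : ℝ, 0 ≤ x → |Q.eval x| ≤ C * (1 + x) ^ Q.natDegree := by
  refine ⟨∑ i ∈ range (Q.natDegree + 1), |Q.coeff i|, fun x hx => ?_⟩
  rw [eval_eq_sum_range, Finset.sum_mul]
  refine (abs_sum_le_sum_abs _ _).trans (sum_le_sum fun i hi => ?_)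
  rw [abs_mul, abs_pow, abs_of_nonneg hx]
  gcongr
  calc x ^ i ≤ (1 + x) ^ i := pow_le_pow_left₀ hx (by linarith) i
    _ ≤ (1 + x) ^ Q.natDegree :=
      pow_le_pow_right₀ (by linarith) (Nat.lt_succ_iff.mp (mem_range.mp hi))

theorem rpow_add_le_mul_one_add_pow {t : ℝ} (lam : ℝ) (ht : 0 < t) {x : ℝ} (hx : 0 ≤ x) :
    (x + t) ^ lam ≤ (t ^ lam + (1 + t) ^ lam) * (1 + x) ^ ⌈lam⌉₊ := by
  have h1x : 1 ≤ (1 + x) ^ ⌈lam⌉₊ := one_le_pow₀ (by linarith)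
  have hts : 0 ≤ (1 + t) ^ lam := by positivity
  rcases le_total lam 0 with hlam | hlam
  · have : (x + t) ^ lam ≤ t ^ lam := Real.rpow_le_rpow_of_nonpos ht (by linarith) hlam
    nlinarith [Real.rpow_nonneg ht.le lam]
  · calc (x + t) ^ lam ≤ ((1 + t) * (1 + x)) ^ lam :=
          Real.rpow_le_rpow (by linarith) (by nlinarith) hlam
      _ = (1 + t) ^ lam * (1 + x) ^ lam := Real.mul_rpow (by linarith) (by linarith)
      _ ≤ (1 + t) ^ lam * (1 + x) ^ ⌈lam⌉₊ := by
          rw [← Real.rpow_natCast]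
          gcongr
          · linarith
          · exact Nat.le_ceil lam
      _ ≤ (t ^ lam + (1 + t) ^ lam) * (1 + x) ^ ⌈lam⌉₊ := by
          gcongr; linarith [Real.rpow_nonneg ht.le lam]

theorem Polynomial.exists_abs_eval_mul_rpow_add_le (Q : ℝ[X]) (lam : ℝ) {t : ℝ} (ht : 0 < t) :
    ∃ P : ℝ[X], ∀ x : ℝ, 0 ≤ x → |Q.eval x * (x + t) ^ lam| ≤ P.eval x := by
  obtain ⟨C, hC⟩ := Q.exists_abs_eval_le_mul_one_add_pow
  refine ⟨Polynomial.C (C * (t ^ lam + (1 + t) ^ lam)) * (1 + X) ^ (Q.natDegree + ⌈lam⌉₊),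
    fun x hx => ?_⟩
  have hxt : 0 ≤ (x + t) ^ lam := Real.rpow_nonneg (by linarith) lam
  rw [abs_mul, abs_of_nonneg hxt]
  simp only [eval_mul, eval_C, eval_pow, eval_add, eval_one, eval_X, pow_add]
  calc |Q.eval x| * (x + t) ^ lam
      ≤ (C * (1 + x) ^ Q.natDegree) * ((t ^ lam + (1 + t) ^ lam) * (1 + x) ^ ⌈lam⌉₊) :=
        mul_le_mul (hC x hx) (rpow_add_le_mul_one_add_pow lam ht hx) hxt
          ((abs_nonneg _).trans (hC x hx))
    _ = _ := by ring

theorem Polynomial.integrableOn_eval_mul_rpow_mul_exp_neg (P : ℝ[X]) {β : ℝ} (hβ : -1 < β) :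
    IntegrableOn (fun x => P.eval x * (x ^ β * Real.exp (-x))) (Ioi 0) := by
  simp_rw [eval_eq_sum_range, Finset.sum_mul]
  refine integrable_finsetSum _ fun i _ => ?_
  have hGamma := Real.GammaIntegral_convergent (s := β + i + 1)
    (by linarith [(Nat.cast_nonneg i : (0 : ℝ) ≤ i)])
  rw [add_sub_cancel_right] at hGamma
  refine IntegrableOn.congr_fun (hGamma.const_mul (P.coeff i)) (fun x (hx : 0 < x) => ?_)
    measurableSet_Ioi
  rw [Real.rpow_add hx, Real.rpow_natCast]
  ring

theorem Polynomial.tendsto_eval_mul_rpow_mul_exp_neg_atTop (P : ℝ[X]) (β : ℝ) :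
    Tendsto (fun x => P.eval x * (x ^ β * Real.exp (-x))) atTop (𝓝 0) := by
  simp_rw [eval_eq_sum_range, Finset.sum_mul]
  rw [← Finset.sum_const_zero (s := range (P.natDegree + 1))]
  refine tendsto_finsetSum _ fun i _ => ?_
  have hlim := (tendsto_rpow_mul_exp_neg_mul_atTop_nhds_zero (β + i) 1 one_pos).const_mul
    (P.coeff i)
  rw [mul_zero] at hlim
  refine hlim.congr' ?_
  filter_upwards [eventually_gt_atTop 0] with x hx
  rw [Real.rpow_add hx, Real.rpow_natCast, neg_one_mul]
  ring

noncomputable def perturbedLaguerreWeight (lam α t x : ℝ) : ℝ :=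
  (x + t) ^ lam * x ^ α * Real.exp (-x)

namespace perturbedLaguerreWeight

variable {lam α t x : ℝ}

theorem nonneg (ht : 0 ≤ t) (hx : 0 ≤ x) : 0 ≤ perturbedLaguerreWeight lam α t x := by
  unfold perturbedLaguerreWeight; positivity

theorem apply_zero (hα : α ≠ 0) : perturbedLaguerreWeight lam α t 0 = 0 := by
  simp [perturbedLaguerreWeight, Real.zero_rpow hα]

theorem div_self_eq (hx : x ≠ 0) :
    perturbedLaguerreWeight lam α t x / x = perturbedLaguerreWeight lam (α - 1) t x := by
  simp only [perturbedLaguerreWeight, Real.rpow_sub_one hx]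
  ring

theorem continuousAt (hxt : 0 < x + t) (hx : x ≠ 0 ∨ 0 ≤ α) :
    ContinuousAt (perturbedLaguerreWeight lam α t) x :=
  (((continuousAt_id.add continuousAt_const).rpow_const (Or.inl hxt.ne')).mul
    (continuousAt_id.rpow_const hx)).mul (Real.continuous_exp.comp continuous_neg).continuousAt

theorem hasDerivAt (hx : 0 < x) (ht : 0 < t) :
    HasDerivAt (perturbedLaguerreWeight lam α t)
      (lam * perturbedLaguerreWeight (lam - 1) α t x
        + α * perturbedLaguerreWeight lam (α - 1) t x - perturbedLaguerreWeight lam α t x) x := by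
  have hshift := ((hasDerivAt_id x).add_const t).rpow_const (p := lam)
    (Or.inl (by simp; linarith))
  have hpow := Real.hasDerivAt_rpow_const (p := α) (Or.inl hx.ne')
  have hexp := (hasDerivAt_neg x).exp
  refine ((hshift.mul hpow).mul hexp).congr_deriv ?_
  simp only [perturbedLaguerreWeight, id, Pi.mul_apply]
  ring

theorem hasDerivAt_param (hxt : 0 < x + t) :
    HasDerivAt (fun s => perturbedLaguerreWeight lam α s x)
      (lam * perturbedLaguerreWeight (lam - 1) α t x) t := by
  have hshift := ((hasDerivAt_id t).const_add x).rpow_const (p := lam) (Or.inl hxt.ne')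
  refine ((hshift.mul_const (x ^ α)).mul_const (Real.exp (-x))).congr_deriv ?_
  simp only [perturbedLaguerreWeight, id]
  ring

theorem le_add_of_mem_Icc {a b s : ℝ} (hx : 0 ≤ x) (ha : 0 < a) (hs : s ∈ Icc a b) :
    perturbedLaguerreWeight lam α s x
      ≤ perturbedLaguerreWeight lam α a x + perturbedLaguerreWeight lam α b x := by
  have hxa : 0 < x + a := by linarith
  have hrpow : (x + s) ^ lam ≤ (x + a) ^ lam + (x + b) ^ lam := by
    rcases le_total lam 0 with hlam | hlam
    · have := Real.rpow_le_rpow_of_nonpos hxa (by linarith [hs.1] : x + a ≤ x + s) hlam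
      linarith [Real.rpow_nonneg (by linarith [hs.1, hs.2] : 0 ≤ x + b) lam]
    · have := Real.rpow_le_rpow (by linarith [hs.1]) (by linarith [hs.2] : x + s ≤ x + b) hlam
      linarith [Real.rpow_nonneg hxa.le lam]
  have hrest : 0 ≤ x ^ α * Real.exp (-x) := by positivity
  simp only [perturbedLaguerreWeight, mul_assoc, ← add_mul]
  exact mul_le_mul_of_nonneg_right hrpow hrest

theorem exists_norm_eval_mul_le (Q : ℝ[X]) (ht : 0 < t) :
    ∃ P : ℝ[X], ∀ x : ℝ, 0 ≤ x →
      ‖Q.eval x * perturbedLaguerreWeight lam α t x‖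
        ≤ P.eval x * (x ^ α * Real.exp (-x)) := by
  obtain ⟨P, hP⟩ := Q.exists_abs_eval_mul_rpow_add_le lam ht
  refine ⟨P, fun x hx => ?_⟩
  have hrest : 0 ≤ x ^ α * Real.exp (-x) := by positivity
  calc ‖Q.eval x * perturbedLaguerreWeight lam α t x‖
      = |Q.eval x * (x + t) ^ lam| * (x ^ α * Real.exp (-x)) := by
        rw [Real.norm_eq_abs, ← abs_of_nonneg hrest, ← abs_mul, perturbedLaguerreWeight]
        ring_nf
    _ ≤ P.eval x * (x ^ α * Real.exp (-x)) := mul_le_mul_of_nonneg_right (hP x hx) hrest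

theorem integrableOn_eval_mul (Q : ℝ[X]) (ht : 0 < t) (hα : -1 < α) :
    IntegrableOn (fun x => Q.eval x * perturbedLaguerreWeight lam α t x) (Ioi 0) := by
  obtain ⟨P, hP⟩ := exists_norm_eval_mul_le (lam := lam) (α := α) Q ht
  refine (P.integrableOn_eval_mul_rpow_mul_exp_neg hα).mono' ?_ ?_
  · refine ContinuousOn.aestronglyMeasurable (fun x (hx : 0 < x) => ?_) measurableSet_Ioi
    exact (Q.continuousAt.mul (continuousAt (by linarith) (Or.inl hx.ne'))).continuousWithinAt
  · filter_upwards [ae_restrict_mem measurableSet_Ioi] with x (hx : 0 < x)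
    exact hP x hx.le

theorem tendsto_eval_mul_atTop (Q : ℝ[X]) (ht : 0 < t) :
    Tendsto (fun x => Q.eval x * perturbedLaguerreWeight lam α t x) atTop (𝓝 0) := by
  obtain ⟨P, hP⟩ := exists_norm_eval_mul_le (lam := lam) (α := α) Q ht
  refine squeeze_zero_norm' ?_ (P.tendsto_eval_mul_rpow_mul_exp_neg_atTop α)
  filter_upwards [eventually_ge_atTop 0] with x hx
  exact hP x hx

theorem hasDerivAt_integral_eval_mul (Q : ℝ[X]) (ht : 0 < t) (hα : -1 < α) :
    HasDerivAt (fun s => ∫ x in Ioi 0, Q.eval x * perturbedLaguerreWeight lam α s x)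
      (lam * ∫ x in Ioi 0, Q.eval x * perturbedLaguerreWeight (lam - 1) α t x) t := by
  rw [← integral_const_mul]
  have hbound_int : Integrable (fun x => |lam| *
      (‖Q.eval x * perturbedLaguerreWeight (lam - 1) α (t / 2) x‖
        + ‖Q.eval x * perturbedLaguerreWeight (lam - 1) α (2 * t) x‖))
      (volume.restrict (Ioi 0)) :=
    ((integrableOn_eval_mul Q (by positivity) hα).norm.add
      (integrableOn_eval_mul Q (by positivity) hα).norm).const_mul _
  refine (hasDerivAt_integral_of_dominated_loc_of_deriv_le
    (F := fun s x => Q.eval x * perturbedLaguerreWeight lam α s x)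
    (F' := fun s x => lam * (Q.eval x * perturbedLaguerreWeight (lam - 1) α s x))
    (Ioo_mem_nhds (half_lt_self ht) (lt_two_mul_self ht)) ?_ (integrableOn_eval_mul Q ht hα)
    ((integrableOn_eval_mul Q ht hα).const_mul lam).aestronglyMeasurable ?_ hbound_int ?_).2
  · filter_upwards [Ioi_mem_nhds ht] with s hs
    exact (integrableOn_eval_mul Q hs hα).aestronglyMeasurable
  · filter_upwards [ae_restrict_mem measurableSet_Ioi] with x (hx : 0 < x) s hs
    have hs0 : 0 < s := (half_pos ht).trans hs.1
    simp only [norm_mul, Real.norm_eq_abs]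
    rw [abs_of_nonneg (nonneg hs0.le hx.le), abs_of_nonneg (nonneg (half_pos ht).le hx.le),
      abs_of_nonneg (nonneg (by positivity) hx.le), ← mul_add]
    gcongr
    exact le_add_of_mem_Icc hx.le (half_pos ht) (Ioo_subset_Icc_self hs)
  · filter_upwards [ae_restrict_mem measurableSet_Ioi] with x (hx : 0 < x) s hs
    refine ((hasDerivAt_param (lam := lam) (α := α) (by linarith [hs.1])).const_mul
      (Q.eval x)).congr_deriv ?_
    ring

theorem integral_derivative_eval_mul_add (Q : ℝ[X]) (ht : 0 < t) (hα : 0 < α) :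
    (∫ x in Ioi 0, (derivative Q).eval x * perturbedLaguerreWeight lam α t x)
      + lam * (∫ x in Ioi 0, Q.eval x * perturbedLaguerreWeight (lam - 1) α t x)
      + α * (∫ x in Ioi 0, Q.eval x * perturbedLaguerreWeight lam (α - 1) t x)
      = ∫ x in Ioi 0, Q.eval x * perturbedLaguerreWeight lam α t x := by
  have hα' : -1 < α := by linarith
  have hint_lam : IntegrableOn
      (fun x => lam * (Q.eval x * perturbedLaguerreWeight (lam - 1) α t x)) (Ioi 0) :=
    (integrableOn_eval_mul Q ht hα').const_mul lam
  have hint_α : IntegrableOn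
      (fun x => α * (Q.eval x * perturbedLaguerreWeight lam (α - 1) t x)) (Ioi 0) :=
    (integrableOn_eval_mul Q ht (by linarith)).const_mul α
  have hint_sum : IntegrableOn
      (fun x => lam * (Q.eval x * perturbedLaguerreWeight (lam - 1) α t x)
        + α * (Q.eval x * perturbedLaguerreWeight lam (α - 1) t x)) (Ioi 0) :=
    hint_lam.add hint_α
  have hint_rest : IntegrableOn
      (fun x => lam * (Q.eval x * perturbedLaguerreWeight (lam - 1) α t x)
        + α * (Q.eval x * perturbedLaguerreWeight lam (α - 1) t x)
        - Q.eval x * perturbedLaguerreWeight lam α t x) (Ioi 0) :=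
    hint_sum.sub (integrableOn_eval_mul Q ht hα')
  have hderiv : ∀ x ∈ Ioi (0 : ℝ),
      HasDerivAt (fun y => Q.eval y * perturbedLaguerreWeight lam α t y)
      ((derivative Q).eval x * perturbedLaguerreWeight lam α t x
        + (lam * (Q.eval x * perturbedLaguerreWeight (lam - 1) α t x)
          + α * (Q.eval x * perturbedLaguerreWeight lam (α - 1) t x)
          - Q.eval x * perturbedLaguerreWeight lam α t x)) x := fun x hx =>
    ((Q.hasDerivAt x).mul (hasDerivAt hx ht)).congr_deriv (by ring)
  have hcont : ContinuousWithinAt (fun y => Q.eval y * perturbedLaguerreWeight lam α t y)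
      (Ici 0) 0 :=
    (Q.continuousAt.mul (continuousAt (by simpa using ht) (Or.inr hα.le))).continuousWithinAt
  have hftc := integral_Ioi_of_hasDerivAt_of_tendsto hcont hderiv
    ((integrableOn_eval_mul _ ht hα').add hint_rest) (tendsto_eval_mul_atTop Q ht)
  rw [apply_zero hα.ne', integral_add (integrableOn_eval_mul _ ht hα')
    hint_rest, integral_sub hint_sum (integrableOn_eval_mul Q ht hα'),
    integral_add hint_lam hint_α, integral_const_mul, integral_const_mul] at hftc
  linarith

theorem integral_mul_div_self_eq (f : ℝ → ℝ) :
    ∫ x in Ioi 0, f x * perturbedLaguerreWeight lam α t x / x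
      = ∫ x in Ioi 0, f x * perturbedLaguerreWeight lam (α - 1) t x :=
  setIntegral_congr_fun measurableSet_Ioi fun x (hx : 0 < x) => by
    rw [mul_div_assoc, div_self_eq hx.ne']

/-- `P s` minimises `∫ q² w(·,s)` over monic `q` of degree `n`, so `s ↦ ∫ (P t)² w(·,s) - H s`
has a local minimum at `t`: only the weight gets differentiated. -/
theorem hasDerivAt_of_eq_integral_sq_of_orthogonal {P : ℝ → ℝ[X]} {H : ℝ → ℝ} {n : ℕ}
    {U : Set ℝ} (hU : U ∈ 𝓝 t) (hUpos : U ⊆ Ioi 0) (hα : -1 < α)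
    (hP : ∀ s ∈ U, IsMonicOfDegree (P s) n)
    (horth : ∀ s ∈ U, ∀ r : ℝ[X], r.degree < n →
      ∫ x in Ioi 0, (P s).eval x * r.eval x * perturbedLaguerreWeight lam α s x = 0)
    (hH : ∀ s ∈ U, H s = ∫ x in Ioi 0, (P s).eval x ^ 2 * perturbedLaguerreWeight lam α s x)
    (hHdiff : DifferentiableAt ℝ H t) :
    HasDerivAt H (lam * ∫ x in Ioi 0, (P t).eval x ^ 2 * perturbedLaguerreWeight (lam - 1) α t x)
      t := by
  have ht : t ∈ U := mem_of_mem_nhds hU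
  have hmin : ∀ s ∈ U,
      H s ≤ ∫ x in Ioi 0, (P t).eval x ^ 2 * perturbedLaguerreWeight lam α s x := by
    intro s hs
    rw [hH s hs]
    exact integral_sq_mul_le_of_isMonicOfDegree
      ((ae_restrict_mem measurableSet_Ioi).mono fun x hx => nonneg (hUpos hs).le (le_of_lt hx))
      (fun q => integrableOn_eval_mul q (hUpos hs) hα) (hP s hs) (hP t ht) (horth s hs)
  have hF := hasDerivAt_integral_eval_mul (lam := lam) ((P t) ^ 2) (hUpos ht) hα
  simp only [eval_pow] at hF
  rw [hF.eq_of_eventuallyLE_of_eq hHdiff.hasDerivAt (eventually_of_mem hU hmin) (hH t ht)]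
  exact hHdiff.hasDerivAt

theorem integral_sq_mul_add_of_orthogonal {q : ℝ[X]} {n : ℕ} (hq : q.natDegree ≤ n)
    (horth : ∀ r : ℝ[X], r.degree < n →
      ∫ x in Ioi 0, q.eval x * r.eval x * perturbedLaguerreWeight lam α t x = 0)
    (ht : 0 < t) (hα : 0 < α) :
    lam * (∫ x in Ioi 0, q.eval x ^ 2 * perturbedLaguerreWeight (lam - 1) α t x)
      + α * (∫ x in Ioi 0, q.eval x ^ 2 * perturbedLaguerreWeight lam (α - 1) t x)
      = ∫ x in Ioi 0, q.eval x ^ 2 * perturbedLaguerreWeight lam α t x := by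
  have hdeg : (C 2 * derivative q).degree < (n : WithBot ℕ) := by
    rcases eq_or_ne q 0 with rfl | hq0
    · simp
    rw [degree_C_mul two_ne_zero]
    exact (degree_derivative_lt hq0).trans_le (degree_le_of_natDegree_le hq)
  have hcross : ∫ x in Ioi 0, (derivative (q ^ 2)).eval x * perturbedLaguerreWeight lam α t x
      = 0 := by
    refine Eq.trans (setIntegral_congr_fun measurableSet_Ioi fun x _ => ?_) (horth _ hdeg)
    rw [derivative_sq]
    simp only [eval_mul, eval_C]
    ring
  have hibp := integral_derivative_eval_mul_add (lam := lam) (q ^ 2) ht hα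
  simp only [hcross, zero_add, eval_pow] at hibp
  exact hibp

end perturbedLaguerreWeight

theorem lemma1_third_identity_general
    (n : ℕ) (α lam : ℝ) (hα : 0 < α)
    (I : Set ℝ) (hIopen : IsOpen I) (hIsub : I ⊆ Set.Ioi (0 : ℝ))
    (p : ℕ → ℝ → Polynomial ℝ) (h : ℕ → ℝ → ℝ)
    (hmonic : ∀ k, ∀ t ∈ I, (p k t).Monic)
    (hdeg : ∀ k, ∀ t ∈ I, (p k t).natDegree = k)
    (hpos : ∀ k, ∀ t ∈ I, 0 < h k t)
    (hnorm : ∀ t ∈ I, h n t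
      = ∫ x in Set.Ioi (0 : ℝ),
          (p n t).eval x ^ 2 * ((x + t) ^ lam * x ^ α * Real.exp (-x)))
    (horth : ∀ j k, ∀ t ∈ I,
      ∫ x in Set.Ioi (0 : ℝ),
          (p j t).eval x * (p k t).eval x * ((x + t) ^ lam * x ^ α * Real.exp (-x))
        = if j = k then h j t else 0)
    (hdiff : ∀ t ∈ I, DifferentiableAt ℝ (fun u => h n u) t) :
    ∀ t ∈ I,
      deriv (fun u => Real.log ((h n u) ^ (-(1 : ℝ) / 2))) t
        = -(1 / 2) + (α / 2) * (1 / h n t) *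
            ∫ x in Set.Ioi (0 : ℝ),
              (p n t).eval x ^ 2 * ((x + t) ^ lam * x ^ α * Real.exp (-x)) / x := by
  intro t ht
  have hperp : ∀ s ∈ I, ∀ r : ℝ[X], r.degree < n →
      ∫ x in Ioi 0, (p n s).eval x * r.eval x * perturbedLaguerreWeight lam α s x = 0 :=
    fun s hs r hr => integral_eval_mul_eval_mul_eq_zero_of_degree_lt
      (fun q => perturbedLaguerreWeight.integrableOn_eval_mul q (hIsub hs) (by linarith))
      (fun k => ⟨hdeg k s hs, hmonic k s hs⟩)
      (fun k hk => (horth n k s hs).trans (if_neg hk.ne')) hr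
  have hderiv := perturbedLaguerreWeight.hasDerivAt_of_eq_integral_sq_of_orthogonal
    (hIopen.mem_nhds ht) hIsub (by linarith) (fun s hs => ⟨hdeg n s hs, hmonic n s hs⟩) hperp
    hnorm (hdiff t ht)
  have hibp := perturbedLaguerreWeight.integral_sq_mul_add_of_orthogonal (hdeg n t ht).le
    (hperp t ht) (hIsub ht) hα
  have hnorm_t : h n t = ∫ x in Ioi 0, (p n t).eval x ^ 2 * perturbedLaguerreWeight lam α t x :=
    hnorm t ht
  change deriv _ t
    = _ + _ * ∫ x in Ioi 0, (p n t).eval x ^ 2 * perturbedLaguerreWeight lam α t x / x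
  rw [deriv_log_rpow _ (hdiff t ht) (eventually_of_mem (hIopen.mem_nhds ht) (hpos n)),
    hderiv.deriv, perturbedLaguerreWeight.integral_mul_div_self_eq]
  rw [← hnorm_t] at hibp
  field_simp [(hpos n t ht).ne']
  linarith

/-- Lemma 1, third identity: with `γ_n(t) = h_n(t)^{−1/2}` for the squared
norm `h_n(t)` of the monic orthogonal polynomial `π_n(x;t)` with respect to the perturbed
Laguerre weight `w(x,t) = (x+t)^λ x^α e^{−x}`, one has
`(d/dt) log γ_n(t) = −1/2 + (α/2) γ_n(t)² ∫₀^∞ π_n(x;t)² w(x,t)/x dx`. -/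
theorem lemma1_third_identity
    (n : ℕ) (α lam : ℝ) (hα : 0 < α) (hsum : α + lam + 1 > 0)
    (I : Set ℝ) (hIopen : IsOpen I) (hIsub : I ⊆ Set.Ioi (0 : ℝ))
    (p : ℕ → ℝ → Polynomial ℝ) (h : ℕ → ℝ → ℝ)
    (hmonic : ∀ k, ∀ t ∈ I, (p k t).Monic)
    (hdeg : ∀ k, ∀ t ∈ I, (p k t).natDegree = k)
    (hpos : ∀ k, ∀ t ∈ I, 0 < h k t)
    (hnorm : ∀ t ∈ I, h n t
      = ∫ x in Set.Ioi (0 : ℝ),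
          (p n t).eval x ^ 2 * ((x + t) ^ lam * x ^ α * Real.exp (-x)))
    (horth : ∀ j k, ∀ t ∈ I,
      ∫ x in Set.Ioi (0 : ℝ),
          (p j t).eval x * (p k t).eval x * ((x + t) ^ lam * x ^ α * Real.exp (-x))
        = if j = k then h j t else 0)
    (hdiff : ∀ t ∈ I, DifferentiableAt ℝ (fun u => h n u) t) :
    ∀ t ∈ I,
      deriv (fun u => Real.log ((h n u) ^ (-(1 : ℝ) / 2))) t
        = -(1 / 2) + (α / 2) * (1 / h n t) *
            ∫ x in Set.Ioi (0 : ℝ),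
              (p n t).eval x ^ 2 * ((x + t) ^ lam * x ^ α * Real.exp (-x)) / x :=
  lemma1_third_identity_general n α lam hα I hIopen hIsub p h hmonic hdeg hpos hnorm horth hdiff
end

section
/- (Reduction of the third-order equation to Painlevé V.) Let α, λ ∈ ℝ. Suppose r : (0,∞) → ℝ is three times continuously differentiable and y : (0,∞) → ℝ is twice continuously differentiable with y(s) ≠ 0 and y(s) ≠ 1 for all s > 0, related by r′(s) = y(s)/(2(1 − y(s))). If r satisfies for all s > 0 the third-order equation 8s² r′ (2r′ + 1) r‴ − 4s² (1 + 4r′)(r″)² + 8s r′ (2r′ + 1) r″ − 4s (r′)² (2r′ + 1)² + λ² (2r′ + 1)² − 4α² (r′)² = 0, then y satisfies for all s > 0 the Painlevé V equation y″ = ( 1/(2y) + 1/(y − 1) ) (y′)² − y′/s + ((y − 1)²/(2s²)) ( α² y − λ²/y ) + y/(2s). -/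
open Set

/-!
Since `2 r′ + 1 = 1/(1 − y)` and `1 + 4 r′ = (1 + y)/(1 − y)`, substituting
`r′ = y/(2(1 − y))`, `r″ = y′/(2(1 − y)²)` and `r‴ = y″/(2(1 − y)²) + (y′)²/(1 − y)³`
turns the left side of the third-order equation into `2 s² y/(1 − y)⁴ · (y″ − P)`, where `P` is
the right side of Painlevé V; the prefactor vanishes nowhere on `s > 0`.
-/

def thirdOrderLhs (α lam s r₁ r₂ r₃ : ℝ) : ℝ :=
  8 * s ^ 2 * r₁ * (2 * r₁ + 1) * r₃ - 4 * s ^ 2 * (1 + 4 * r₁) * r₂ ^ 2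
    + 8 * s * r₁ * (2 * r₁ + 1) * r₂ - 4 * s * r₁ ^ 2 * (2 * r₁ + 1) ^ 2
    + lam ^ 2 * (2 * r₁ + 1) ^ 2 - 4 * α ^ 2 * r₁ ^ 2

noncomputable def painleveVRhs (α lam s y y₁ : ℝ) : ℝ :=
  (1 / (2 * y) + 1 / (y - 1)) * y₁ ^ 2 - y₁ / s
    + (y - 1) ^ 2 / (2 * s ^ 2) * (α ^ 2 * y - lam ^ 2 / y) + y / (2 * s)

theorem thirdOrderLhs_substitution (α lam : ℝ) {s y y₁ y₂ : ℝ} (hs : s ≠ 0)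
    (hy0 : y ≠ 0) (hy1 : y ≠ 1) :
    thirdOrderLhs α lam s (y / (2 * (1 - y))) (y₁ / (2 * (1 - y) ^ 2))
        (y₂ / (2 * (1 - y) ^ 2) + y₁ ^ 2 / (1 - y) ^ 3)
      = 2 * s ^ 2 * y / (1 - y) ^ 4 * (y₂ - painleveVRhs α lam s y y₁) := by
  unfold thirdOrderLhs painleveVRhs
  field_simp
  ring

theorem thirdOrderLhs_substitution_eq_zero_iff (α lam : ℝ) {s y y₁ y₂ : ℝ} (hs : s ≠ 0)
    (hy0 : y ≠ 0) (hy1 : y ≠ 1) :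
    thirdOrderLhs α lam s (y / (2 * (1 - y))) (y₁ / (2 * (1 - y) ^ 2))
        (y₂ / (2 * (1 - y) ^ 2) + y₁ ^ 2 / (1 - y) ^ 3) = 0
      ↔ y₂ = painleveVRhs α lam s y y₁ := by
  have hy1' : 1 - y ≠ 0 := sub_ne_zero.2 hy1.symm
  rw [thirdOrderLhs_substitution α lam hs hy0 hy1, mul_eq_zero, sub_eq_zero]
  simp [hs, hy0, hy1']

theorem HasDerivAt.div_two_mul_one_sub {f : ℝ → ℝ} {f' x : ℝ} (hf : HasDerivAt f f' x)
    (hx : f x ≠ 1) :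
    HasDerivAt (fun t => f t / (2 * (1 - f t))) (f' / (2 * (1 - f x) ^ 2)) x := by
  have hx' : 1 - f x ≠ 0 := sub_ne_zero.2 hx.symm
  refine (hf.fun_div ((hf.const_sub 1).const_mul 2) (by simpa using hx')).congr_deriv ?_
  field_simp
  ring

theorem HasDerivAt.div_two_mul_one_sub_sq {f g : ℝ → ℝ} {f' g' x : ℝ}
    (hf : HasDerivAt f f' x) (hg : HasDerivAt g g' x) (hx : g x ≠ 1) :
    HasDerivAt (fun t => f t / (2 * (1 - g t) ^ 2))
      (f' / (2 * (1 - g x) ^ 2) + f x * g' / (1 - g x) ^ 3) x := by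
  have hx' : 1 - g x ≠ 0 := sub_ne_zero.2 hx.symm
  refine (hf.fun_div (((hg.const_sub 1).fun_pow 2).const_mul 2) (by simpa using hx'))
    |>.congr_deriv ?_
  field_simp
  ring

theorem IsOpen.deriv_eq_of_eqOn {f g : ℝ → ℝ} {g' x : ℝ} {U : Set ℝ} (hU : IsOpen U)
    (h : EqOn f g U) (hx : x ∈ U) (hg : HasDerivAt g g' x) : deriv f x = g' :=
  (hg.congr_of_eventuallyEq (h.eventuallyEq_of_mem (hU.mem_nhds hx))).deriv

theorem third_order_reduces_to_painleveV_general
    (α lam : ℝ) (r y : ℝ → ℝ)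
    (hy : ContDiffOn ℝ 2 y (Set.Ioi (0 : ℝ)))
    (hy0 : ∀ s ∈ Set.Ioi (0 : ℝ), y s ≠ 0)
    (hy1 : ∀ s ∈ Set.Ioi (0 : ℝ), y s ≠ 1)
    (hrel : ∀ s ∈ Set.Ioi (0 : ℝ), deriv r s = y s / (2 * (1 - y s)))
    (hODE : ∀ s ∈ Set.Ioi (0 : ℝ),
      8 * s ^ 2 * deriv r s * (2 * deriv r s + 1) * deriv (deriv (deriv r)) s
        - 4 * s ^ 2 * (1 + 4 * deriv r s) * (deriv (deriv r) s) ^ 2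
        + 8 * s * deriv r s * (2 * deriv r s + 1) * deriv (deriv r) s
        - 4 * s * (deriv r s) ^ 2 * (2 * deriv r s + 1) ^ 2
        + lam ^ 2 * (2 * deriv r s + 1) ^ 2
        - 4 * α ^ 2 * (deriv r s) ^ 2 = 0) :
    ∀ s ∈ Set.Ioi (0 : ℝ),
      deriv (deriv y) s
        = (1 / (2 * y s) + 1 / (y s - 1)) * (deriv y s) ^ 2
          - deriv y s / s
          + (y s - 1) ^ 2 / (2 * s ^ 2) * (α ^ 2 * y s - lam ^ 2 / y s)
          + y s / (2 * s) := by
  have hy' : ∀ t ∈ Ioi (0 : ℝ), HasDerivAt y (deriv y t) t := fun t ht =>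
    ((hy.differentiableOn (by norm_num)).differentiableAt (isOpen_Ioi.mem_nhds ht)).hasDerivAt
  have hy'' : ∀ t ∈ Ioi (0 : ℝ), HasDerivAt (deriv y) (deriv (deriv y) t) t := fun t ht =>
    (((hy.deriv_of_isOpen (m := 1) isOpen_Ioi (by norm_num)).differentiableOn (by norm_num))
      |>.differentiableAt (isOpen_Ioi.mem_nhds ht)).hasDerivAt
  have hr₂ : EqOn (deriv (deriv r)) (fun t => deriv y t / (2 * (1 - y t) ^ 2)) (Ioi 0) :=
    fun t ht => isOpen_Ioi.deriv_eq_of_eqOn hrel ht ((hy' t ht).div_two_mul_one_sub (hy1 t ht))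
  intro s hs
  have hr₃ : deriv (deriv (deriv r)) s
      = deriv (deriv y) s / (2 * (1 - y s) ^ 2) + deriv y s ^ 2 / (1 - y s) ^ 3 := by
    rw [sq (deriv y s)]
    exact isOpen_Ioi.deriv_eq_of_eqOn hr₂ hs
      ((hy'' s hs).div_two_mul_one_sub_sq (hy' s hs) (hy1 s hs))
  have h : thirdOrderLhs α lam s (deriv r s) (deriv (deriv r) s) (deriv (deriv (deriv r)) s) = 0 :=
    hODE s hs
  rwa [hrel s hs, hr₂ hs, hr₃,
    thirdOrderLhs_substitution_eq_zero_iff α lam hs.ne' (hy0 s hs) (hy1 s hs)] at h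

/-- if `r` solves the third-order nonlinear equation and
`r′(s) = y(s)/(2(1 − y(s)))`, then `y` solves the particular Painlevé V equation
`y″ = (1/(2y) + 1/(y−1)) (y′)² − y′/s + ((y−1)²/(2s²))(α² y − λ²/y) + y/(2s)`. -/
theorem third_order_reduces_to_painleveV
    (α lam : ℝ) (r y : ℝ → ℝ)
    (hr : ContDiffOn ℝ 3 r (Set.Ioi (0 : ℝ)))
    (hy : ContDiffOn ℝ 2 y (Set.Ioi (0 : ℝ)))
    (hy0 : ∀ s ∈ Set.Ioi (0 : ℝ), y s ≠ 0)
    (hy1 : ∀ s ∈ Set.Ioi (0 : ℝ), y s ≠ 1)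
    (hrel : ∀ s ∈ Set.Ioi (0 : ℝ), deriv r s = y s / (2 * (1 - y s)))
    (hODE : ∀ s ∈ Set.Ioi (0 : ℝ),
      8 * s ^ 2 * deriv r s * (2 * deriv r s + 1) * deriv (deriv (deriv r)) s
        - 4 * s ^ 2 * (1 + 4 * deriv r s) * (deriv (deriv r) s) ^ 2
        + 8 * s * deriv r s * (2 * deriv r s + 1) * deriv (deriv r) s
        - 4 * s * (deriv r s) ^ 2 * (2 * deriv r s + 1) ^ 2
        + lam ^ 2 * (2 * deriv r s + 1) ^ 2
        - 4 * α ^ 2 * (deriv r s) ^ 2 = 0) :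
    ∀ s ∈ Set.Ioi (0 : ℝ),
      deriv (deriv y) s
        = (1 / (2 * y s) + 1 / (y s - 1)) * (deriv y s) ^ 2
          - deriv y s / s
          + (y s - 1) ^ 2 / (2 * s ^ 2) * (α ^ 2 * y s - lam ^ 2 / y s)
          + y s / (2 * s) :=
  third_order_reduces_to_painleveV_general α lam r y hy hy0 hy1 hrel hODE
end
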